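/- arXiv:2108.05496 — 3 statements merged into one kernel-verified Lean document; each statement's English description precedes it below -/
import Mathlib

section
/- Let 𝔞 be a nonzero proper ideal of R with prime factorization 𝔞 = 𝔭₁^{e₁} ⋯ 𝔭ᵣ^{eᵣ} into powers of distinct prime ideals. Then 𝔞 has inertia degree one if and only if both of the following hold: (i) for each 1 ≤ i ≤ r, the prime 𝔭ᵢ has inertia degree one, and eᵢ = 1 whenever 𝔭ᵢ is ramified; (ii) gcd(𝔑(𝔭ᵢ), 𝔑(𝔭ⱼ)) = 1 for all 1 ≤ i < j ≤ r. -/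
open NumberField Filter Asymptotics Topology

set_option maxHeartbeats 1000000
set_option synthInstance.maxHeartbeats 400000

noncomputable def Rring (L : Type) [Field L] [NumberField L] (η : ℕ) : Subalgebra (𝓞 L) L :=
  Algebra.adjoin (𝓞 L) {((η : L))⁻¹}

def DegOne {L : Type} [Field L] [NumberField L] {η : ℕ} (𝔞 : Ideal ↥(Rring L η)) : Prop :=
  𝔞 ≠ ⊥ ∧ Function.Surjective ⇑(Int.castRingHom (↥(Rring L η) ⧸ 𝔞))

noncomputable def idealNorm {L : Type} [Field L] [NumberField L] {η : ℕ}
    (𝔞 : Ideal ↥(Rring L η)) : ℕ :=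
  Nat.card (↥(Rring L η) ⧸ 𝔞)

def Sset (L : Type) [Field L] [NumberField L] (η n : ℕ) : Set (Ideal ↥(Rring L η)) :=
  {𝔞 | DegOne 𝔞 ∧ idealNorm 𝔞 = n}

noncomputable def rho (L : Type) [Field L] [NumberField L] (η n : ℕ) : ℕ :=
  Nat.card ↥(Sset L η n)

noncomputable def rhoSum (L : Type) [Field L] [NumberField L] (η : ℕ)
    (res : Ideal ↥(Rring L η) → ℕ) (h : ℤ) (n : ℕ) : ℂ :=
  ∑ᶠ 𝔞 ∈ Sset L η n, Complex.exp (2 * (Real.pi : ℂ) * Complex.I * (h : ℂ) * (res 𝔞 : ℂ) / (n : ℂ))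

def SplitsCompletely (L : Type) [Field L] [NumberField L] (p : ℕ) : Prop :=
  ∃ s : Finset (Ideal (𝓞 L)), s.card = Module.finrank ℚ L ∧
    (∀ P ∈ s, P.IsPrime ∧ Nat.card (𝓞 L ⧸ P) = p) ∧
    Ideal.span {((p : ℕ) : 𝓞 L)} = ∏ P ∈ s, P

def IsDiscOf (D : ℤ) (f : Polynomial ℤ) : Prop :=
  ∃ g : Fin f.natDegree → ℂ,
    (f.map (Int.castRingHom ℂ)).roots = Multiset.map g Finset.univ.val ∧
    (D : ℂ) = (f.leadingCoeff : ℂ) ^ (2 * f.natDegree - 2) *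
      ∏ i : Fin f.natDegree, ∏ j : Fin f.natDegree,
        (if (i : ℕ) < (j : ℕ) then (g i - g j) ^ 2 else 1)

open scoped Classical in
noncomputable def omegaP (L : Type) [Field L] [NumberField L] (η : ℕ) (Df : ℤ) (n : ℕ) : ℕ :=
  (n.primeFactors.filter (fun p : ℕ => ¬ ((p : ℕ) : ℤ) ∣ (η : ℤ) * Df ∧ SplitsCompletely L p)).card

def UnramifiedPrime (L : Type) [Field L] [NumberField L] (η p : ℕ) : Prop :=
  ¬ ∃ 𝔭 : Ideal ↥(Rring L η), 𝔭.IsPrime ∧ 𝔭 ≠ ⊥ ∧ 𝔭 ^ 2 ∣ Ideal.span {((p : ℕ) : ↥(Rring L η))}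

def RamifiedIdeal {L : Type} [Field L] [NumberField L] {η : ℕ} (𝔭 : Ideal ↥(Rring L η)) : Prop :=
  ∃ p : ℕ, p.Prime ∧ ((p : ℕ) : ↥(Rring L η)) ∈ 𝔭 ∧ 𝔭 ^ 2 ∣ Ideal.span {((p : ℕ) : ↥(Rring L η))}

noncomputable def rhoO (L : Type) [Field L] [NumberField L] (n : ℕ) : ℕ :=
  Nat.card {𝔞 : Ideal (𝓞 L) //
    Function.Surjective ⇑(Int.castRingHom ((𝓞 L) ⧸ 𝔞)) ∧ Nat.card ((𝓞 L) ⧸ 𝔞) = n}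

def IsNormalDigits (n : ℕ) (a : ℕ → ℕ) : Prop :=
  ∀ m : ℕ, 0 < m → ∀ ω : Fin m → ℕ, (∀ i, ω i < n) →
    Filter.Tendsto
      (fun N : ℕ =>
        (((Finset.range N).filter (fun l => ∀ i : Fin m, a (l + (i : ℕ)) = ω i)).card : ℝ) / N)
      Filter.atTop (nhds (1 / (n : ℝ) ^ m))

section AuxGeneral
set_option linter.unusedSectionVars false

section general
variable (S : Type*) [CommRing S] [Finite S] [Nontrivial S]

lemma my_addOrderOf_one : addOrderOf (1 : S) = ringChar S := by
  have h1 : ((addOrderOf (1 : S) : ℕ) : S) = 0 := by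
    have := addOrderOf_nsmul_eq_zero (1 : S)
    simpa [nsmul_eq_mul] using this
  have h2 : ringChar S ∣ addOrderOf (1 : S) := (ringChar.spec S _).mp h1
  have h3 : addOrderOf (1 : S) ∣ ringChar S := by
    apply addOrderOf_dvd_of_nsmul_eq_zero
    simp [nsmul_eq_mul, ringChar.spec S (ringChar S) |>.mpr dvd_rfl]
  exact Nat.dvd_antisymm h3 h2

lemma surj_iff_char_eq_card :
    Function.Surjective (Int.cast : ℤ → S) ↔ ringChar S = Nat.card S := by
  have hrange : Set.range (Int.cast : ℤ → S) = (AddSubgroup.zmultiples (1 : S) : Set S) := by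
    ext x
    simp only [Set.mem_range, SetLike.mem_coe, AddSubgroup.mem_zmultiples_iff]
    constructor
    · rintro ⟨n, rfl⟩; exact ⟨n, by simp [zsmul_one]⟩
    · rintro ⟨n, rfl⟩; exact ⟨n, by simp [zsmul_one]⟩
  have hcard : Nat.card (AddSubgroup.zmultiples (1 : S)) = ringChar S := by
    rw [Nat.card_zmultiples, my_addOrderOf_one]
  constructor
  · intro h
    have : (AddSubgroup.zmultiples (1 : S) : Set S) = Set.univ := by
      rw [← hrange]; exact Set.range_eq_univ.mpr h
    have htop : AddSubgroup.zmultiples (1 : S) = ⊤ := by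
      rw [← AddSubgroup.coe_eq_univ, this]
    rw [← hcard, htop, ← Nat.card_congr (Equiv.Set.univ S)]
    rfl
  · intro h
    have htop : AddSubgroup.zmultiples (1 : S) = ⊤ := by
      apply AddSubgroup.eq_top_of_card_eq
      rw [hcard, h]
    intro x
    have : x ∈ AddSubgroup.zmultiples (1 : S) := htop ▸ AddSubgroup.mem_top x
    rw [AddSubgroup.mem_zmultiples_iff] at this
    obtain ⟨n, hn⟩ := this
    exact ⟨n, by simpa [zsmul_one] using hn⟩

lemma charP_card_of_surj (h : Function.Surjective (Int.cast : ℤ → S)) :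
    CharP S (Nat.card S) := by
  rw [← (surj_iff_char_eq_card S).mp h]
  exact ringChar.charP S
-- end

section general
set_option linter.unusedSectionVars false

lemma int_crt {ι : Type*} (s : Finset ι) (c : ι → ℕ)
    (hcop : ∀ i ∈ s, ∀ j ∈ s, i ≠ j → Nat.Coprime (c i) (c j)) (n : ι → ℤ) :
    ∃ m : ℤ, ∀ i ∈ s, (c i : ℤ) ∣ m - n i := by
  classical
  induction s using Finset.cons_induction with
  | empty => exact ⟨0, by simp⟩
  | cons a s ha ih =>
    obtain ⟨m, hm⟩ := ih (fun i hi j hj hij =>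
      hcop i (Finset.mem_cons_of_mem hi) j (Finset.mem_cons_of_mem hj) hij)
    have hcop2 : Nat.Coprime (c a) (∏ i ∈ s, c i) :=
      Nat.Coprime.prod_right fun i hi =>
        hcop a (Finset.mem_cons_self a s) i (Finset.mem_cons_of_mem hi)
          (fun h => ha (h ▸ hi))
    have : IsCoprime ((c a : ℤ)) ((∏ i ∈ s, c i : ℕ) : ℤ) :=
      Nat.isCoprime_iff_coprime.mpr hcop2
    obtain ⟨u, v, huv⟩ := this
    set P : ℤ := ((∏ i ∈ s, c i : ℕ) : ℤ)
    refine ⟨n a * v * P + m * u * (c a : ℤ), ?_⟩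
    intro i hi
    rcases Finset.mem_cons.mp hi with rfl | hi
    · have : n i * v * P + m * u * (c i : ℤ) - n i
          = (m - n i) * u * (c i : ℤ) + (n i) * (u * (c i:ℤ) + v * P - 1) := by ring
      rw [this, huv]
      simpa using Dvd.dvd.mul_left (Dvd.dvd.mul_right dvd_rfl u) (m - n i)
    · have hdP : (c i : ℤ) ∣ P := by
        exact Int.natCast_dvd_natCast.mpr (Finset.dvd_prod_of_mem c hi)
      have : n a * v * P + m * u * (c a : ℤ) - n i
          = (n a - n i) * v * P + (m - n i) * u * (c a : ℤ)
            + n i * (u * (c a:ℤ) + v * P - 1) := by ring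
      rw [this, huv]
      simp only [sub_self, mul_zero, add_zero]
      exact dvd_add (Dvd.dvd.mul_left hdP _) (((hm i hi).mul_right u).mul_right _)

variable {ι : Type*} [Fintype ι] (S : ι → Type*) [∀ i, CommRing (S i)]
  [∀ i, Finite (S i)] [∀ i, Nontrivial (S i)]

lemma surj_pi_iff :
    Function.Surjective (Int.cast : ℤ → ∀ i, S i) ↔
      ((∀ i, Function.Surjective (Int.cast : ℤ → S i)) ∧
        Pairwise fun i j => Nat.Coprime (Nat.card (S i)) (Nat.card (S j))) := by
  classical
  constructor
  · intro h
    have hsurj : ∀ i, Function.Surjective (Int.cast : ℤ → S i) := by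
      intro i x
      obtain ⟨n, hn⟩ := h (Function.update (0 : ∀ i, S i) i x)
      exact ⟨n, by simpa using congrFun hn i⟩
    refine ⟨hsurj, ?_⟩
    intro i j hij
    haveI := charP_card_of_surj (S i) (hsurj i)
    haveI := charP_card_of_surj (S j) (hsurj j)
    obtain ⟨n, hn⟩ := h (Function.update (0 : ∀ i, S i) i 1)
    have h1 : ((n - 1 : ℤ) : S i) = 0 := by
      have h' : ((n : ℤ) : S i) = 1 := by simpa using congrFun hn i
      push_cast
      rw [h']; ring
    have h0 : ((n : ℤ) : S j) = 0 := by
      simpa [Function.update_of_ne (Ne.symm hij)] using congrFun hn j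
    have d1 : ((Nat.card (S i) : ℤ)) ∣ n - 1 :=
      (CharP.intCast_eq_zero_iff (S i) (Nat.card (S i)) _).mp h1
    have d0 : ((Nat.card (S j) : ℤ)) ∣ n :=
      (CharP.intCast_eq_zero_iff (S j) (Nat.card (S j)) _).mp h0
    set g := Nat.gcd (Nat.card (S i)) (Nat.card (S j))
    have hg1 : (g : ℤ) ∣ n - 1 := dvd_trans (Int.natCast_dvd_natCast.mpr (Nat.gcd_dvd_left _ _)) d1
    have hg0 : (g : ℤ) ∣ n := dvd_trans (Int.natCast_dvd_natCast.mpr (Nat.gcd_dvd_right _ _)) d0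
    have : (g : ℤ) ∣ 1 := by
      have := dvd_sub hg0 hg1
      simpa using this
    have : (g : ℤ) ∣ ((1 : ℕ) : ℤ) := by simpa using this
    exact Nat.dvd_one.mp (Int.natCast_dvd_natCast.mp this)
  · rintro ⟨hsurj, hcop⟩
    intro t
    choose n hn using fun i => hsurj i (t i)
    haveI := fun i => charP_card_of_surj (S i) (hsurj i)
    obtain ⟨m, hm⟩ := int_crt Finset.univ (fun i => Nat.card (S i))
      (fun i _ j _ hij => hcop hij) n
    refine ⟨m, funext fun i => ?_⟩
    have : ((m - n i : ℤ) : S i) = 0 :=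
      (CharP.intCast_eq_zero_iff (S i) (Nat.card (S i)) _).mpr (hm i (Finset.mem_univ i))
    have heq : ((m : ℤ) : S i) = ((n i : ℤ) : S i) := by
      have h' := this; push_cast at h'
      exact sub_eq_zero.mp h'
    simp only [Pi.intCast_apply] at *
    rw [heq, hn i]
end general




section setup
variable (L : Type) [Field L] [NumberField L] (η : ℕ)

lemma etaL_ne (hη : 0 < η) : ((η : L)) ≠ 0 := Nat.cast_ne_zero.mpr hη.ne'

lemma etaO_ne (hη : 0 < η) : ((η : 𝓞 L)) ≠ 0 := Nat.cast_ne_zero.mpr hη.ne'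

lemma inv_mem : ((η : L))⁻¹ ∈ Rring L η :=
  Algebra.subset_adjoin (Set.mem_singleton _)

lemma isUnit_eta (hη : 0 < η) : IsUnit ((η : ↥(Rring L η))) := by
  refine IsUnit.of_mul_eq_one ⟨((η : L))⁻¹, inv_mem L η⟩ ?_
  apply Subtype.ext
  push_cast
  exact mul_inv_cancel₀ (etaL_ne L η hη)

lemma algMapR_injective : Function.Injective (algebraMap (𝓞 L) ↥(Rring L η)) := by
  intro a b hab
  have h2 : (algebraMap (𝓞 L) L) a = (algebraMap (𝓞 L) L) b :=
    congrArg (fun x : ↥(Rring L η) => (x : L)) hab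
  exact (IsFractionRing.injective (𝓞 L) L) h2

lemma Rring_isLocalization (hη : 0 < η) :
    IsLocalization (Submonoid.powers ((η : 𝓞 L))) ↥(Rring L η) := by
  constructor
  constructor
  · rintro ⟨y, n, rfl⟩
    have : (algebraMap (𝓞 L) ↥(Rring L η)) ((η : 𝓞 L) ^ n) = ((η : ↥(Rring L η))) ^ n := by
      rw [map_pow, map_natCast]
    rw [this]
    exact (isUnit_eta L η hη).pow n
  · rintro ⟨z, hz⟩
    have key : ∀ z ∈ Rring L η, ∃ (a : 𝓞 L) (n : ℕ),
        z * (η : L) ^ n = algebraMap (𝓞 L) L a := by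
      intro z hz
      induction hz using Algebra.adjoin_induction with
      | mem x hx =>
        rcases hx with rfl
        exact ⟨1, 1, by rw [pow_one, map_one, inv_mul_cancel₀ (etaL_ne L η hη)]⟩
      | algebraMap r => exact ⟨r, 0, by simp⟩
      | add x y hx hy ihx ihy =>
        obtain ⟨a, n, ha⟩ := ihx
        obtain ⟨b, m, hb⟩ := ihy
        refine ⟨a * (η : 𝓞 L) ^ m + b * (η : 𝓞 L) ^ n, n + m, ?_⟩
        rw [map_add, map_mul, map_mul, ← ha, ← hb, map_pow, map_pow, map_natCast]
        ring
      | mul x y hx hy ihx ihy =>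
        obtain ⟨a, n, ha⟩ := ihx
        obtain ⟨b, m, hb⟩ := ihy
        refine ⟨a * b, n + m, ?_⟩
        rw [map_mul, ← ha, ← hb]
        ring
    obtain ⟨a, n, h⟩ := key z hz
    refine ⟨⟨a, ⟨(η : 𝓞 L) ^ n, n, rfl⟩⟩, ?_⟩
    apply Subtype.ext
    show z * ((algebraMap (𝓞 L) ↥(Rring L η)) ((η : 𝓞 L) ^ n) : L) = _
    have h1 : ((algebraMap (𝓞 L) ↥(Rring L η)) ((η : 𝓞 L) ^ n) : L)
        = (η : L) ^ n := by
      show (algebraMap (𝓞 L) L) ((η : 𝓞 L) ^ n) = _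
      rw [map_pow, map_natCast]
    rw [h1, h]
    rfl
  · intro x y hxy
    exact ⟨1, by rw [algMapR_injective L η hxy]⟩

lemma Rring_isDedekind (hη : 0 < η) : IsDedekindDomain ↥(Rring L η) := by
  haveI := Rring_isLocalization L η hη
  exact IsLocalization.isDedekindDomain (𝓞 L)
    (powers_le_nonZeroDivisors_of_noZeroDivisors (etaO_ne L η hη)) ↥(Rring L η)

end setup

section finiteness
variable (L : Type) [Field L] [NumberField L] (η : ℕ)

lemma quot_finite (hη : 0 < η) (𝔞 : Ideal ↥(Rring L η)) (h : 𝔞 ≠ ⊥) :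
    Finite (↥(Rring L η) ⧸ 𝔞) := by
  haveI := Rring_isLocalization L η hη
  set R := ↥(Rring L η)
  set f := algebraMap (𝓞 L) R with hf
  set 𝔟 := 𝔞.comap f with h𝔟def
  obtain ⟨x, hx, hx0⟩ := Submodule.ne_bot_iff _ |>.mp h
  obtain ⟨⟨a, m⟩, hm⟩ := IsLocalization.surj (Submonoid.powers ((η : 𝓞 L))) x
  have hfm0 : f (m : 𝓞 L) ≠ 0 := by
    intro h0
    obtain ⟨k, hk⟩ := m.2
    apply etaO_ne L η hη
    have : ((m : 𝓞 L)) = 0 := algMapR_injective L η (by rw [h0, map_zero])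
    rw [← hk] at this
    exact (pow_eq_zero_iff'.mp this).1
  have h𝔟 : 𝔟 ≠ ⊥ := by
    intro hb
    have ha𝔟 : a ∈ 𝔟 := by
      rw [h𝔟def, Ideal.mem_comap, ← hm]
      exact Ideal.mul_mem_right _ _ hx
    rw [hb, Submodule.mem_bot] at ha𝔟
    rw [ha𝔟, map_zero] at hm
    exact hx0 (by
      rcases mul_eq_zero.mp hm with h' | h'
      · exact h'
      · exact absurd h' hfm0)
  haveI : Fintype (𝓞 L ⧸ 𝔟) := @Fintype.ofFinite _ (Ideal.finiteQuotientOfFreeOfNeBot 𝔟 h𝔟)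
  -- η is invertible modulo 𝔟
  have hinj : Function.Injective (fun y : 𝓞 L ⧸ 𝔟 => ((η : 𝓞 L ⧸ 𝔟)) * y) := by
    intro y1 y2 h12
    obtain ⟨z1, rfl⟩ := Ideal.Quotient.mk_surjective y1
    obtain ⟨z2, rfl⟩ := Ideal.Quotient.mk_surjective y2
    simp only at h12
    have h12' : Ideal.Quotient.mk 𝔟 ((η : 𝓞 L) * z1) = Ideal.Quotient.mk 𝔟 ((η : 𝓞 L) * z2) := by
      rw [map_mul, map_mul, map_natCast, h12]
    have hmem : (η : 𝓞 L) * z1 - (η : 𝓞 L) * z2 ∈ 𝔟 := Ideal.Quotient.eq.mp h12'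
    have hmem2 : (η : 𝓞 L) * (z1 - z2) ∈ 𝔟 := by rwa [mul_sub]
    rw [h𝔟def, Ideal.mem_comap, map_mul, map_natCast] at hmem2
    have : z1 - z2 ∈ 𝔟 := Ideal.mem_comap.mpr
      ((Ideal.unit_mul_mem_iff_mem 𝔞 (isUnit_eta L η hη)).mp hmem2)
    exact Ideal.Quotient.eq.mpr this
  have hsurjQ : Function.Surjective (fun y : 𝓞 L ⧸ 𝔟 => ((η : 𝓞 L ⧸ 𝔟)) * y) :=
    Finite.injective_iff_surjective.mp hinj
  obtain ⟨cbar, hc⟩ := hsurjQ 1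
  obtain ⟨c, rfl⟩ := Ideal.Quotient.mk_surjective cbar
  have hc' : f ((η : 𝓞 L) * c - 1) ∈ 𝔞 := by
    rw [← Ideal.mem_comap]
    show _ ∈ 𝔟
    apply Ideal.Quotient.eq_zero_iff_mem.mp
    rw [map_sub, map_mul, map_natCast, map_one]
    simp only at hc
    rw [hc]; ring
  -- the composite 𝓞 L →+* R ⧸ 𝔞 is surjective
  set g : 𝓞 L →+* R ⧸ 𝔞 := (Ideal.Quotient.mk 𝔞).comp f with hg
  have hgsurj : Function.Surjective g := by
    intro y
    obtain ⟨x', rfl⟩ := Ideal.Quotient.mk_surjective y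
    obtain ⟨⟨a', m'⟩, hm'⟩ := IsLocalization.surj (Submonoid.powers ((η : 𝓞 L))) x'
    obtain ⟨k, hk⟩ := m'.2
    refine ⟨a' * c ^ k, ?_⟩
    show Ideal.Quotient.mk 𝔞 (f (a' * c ^ k)) = Ideal.Quotient.mk 𝔞 x'
    apply Ideal.Quotient.eq.mpr
    have h1 : f a' = x' * f (m' : 𝓞 L) := hm'.symm
    have h2 : f ((m' : 𝓞 L)) = f ((η : 𝓞 L)) ^ k := by rw [← hk, map_pow]
    have key : f (a' * c ^ k) - x' = x' * ((f ((η : 𝓞 L) * c)) ^ k - 1) := by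
      rw [map_mul, map_pow, h1, h2, map_mul]
      ring
    rw [key]
    obtain ⟨w, hw⟩ := sub_dvd_pow_sub_pow (f ((η : 𝓞 L) * c)) 1 k
    rw [one_pow] at hw
    rw [hw]
    have : f ((η : 𝓞 L) * c) - 1 ∈ 𝔞 := by
      have := hc'
      rwa [map_sub, map_one] at this
    exact Ideal.mul_mem_left _ _ (Ideal.mul_mem_right _ _ this)
  have hker : ∀ b ∈ 𝔟, g b = 0 := by
    intro b hb
    show Ideal.Quotient.mk 𝔞 (f b) = 0
    exact Ideal.Quotient.eq_zero_iff_mem.mpr (Ideal.mem_comap.mp hb)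
  have hliftsurj : Function.Surjective (Ideal.Quotient.lift 𝔟 g hker) := by
    intro y
    obtain ⟨b, hb⟩ := hgsurj y
    exact ⟨Ideal.Quotient.mk 𝔟 b, by rwa [Ideal.Quotient.lift_mk]⟩
  exact Finite.of_surjective _ hliftsurj

end finiteness
section arith

lemma coprime_iff_charne {m n p p' : ℕ} (hp : p.Prime) (hp' : p'.Prime)
    (hm0 : m ≠ 0) (hn0 : n ≠ 0)
    (hm : ∀ q, q.Prime → (q ∣ m ↔ q = p)) (hn : ∀ q, q.Prime → (q ∣ n ↔ q = p')) :
    Nat.Coprime m n ↔ p ≠ p' := by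
  constructor
  · intro hc heq
    have hd := Nat.dvd_gcd ((hm p hp).mpr rfl) ((hn p hp).mpr heq)
    rw [hc] at hd
    exact hp.ne_one (Nat.dvd_one.mp hd)
  · intro hne
    by_contra hnc
    have hg0 : Nat.gcd m n ≠ 0 := fun h => hm0 (Nat.eq_zero_of_gcd_eq_zero_left h)
    obtain ⟨q, hq, hqd⟩ := Nat.exists_prime_and_dvd hnc
    have h1 := (hm q hq).mp (hqd.trans (Nat.gcd_dvd_left _ _))
    have h2 := (hn q hq).mp (hqd.trans (Nat.gcd_dvd_right _ _))
    exact hne (h1 ▸ h2)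

lemma surj_factor {R : Type*} [CommRing R] {I J : Ideal R} (hIJ : I ≤ J)
    (h : Function.Surjective (Int.cast : ℤ → R ⧸ I)) :
    Function.Surjective (Int.cast : ℤ → R ⧸ J) := by
  intro y
  obtain ⟨x, rfl⟩ := Ideal.Quotient.mk_surjective y
  obtain ⟨n, hn⟩ := h (Ideal.Quotient.mk I x)
  refine ⟨n, ?_⟩
  have := congrArg (Ideal.Quotient.factor hIJ) hn
  rwa [map_intCast, Ideal.Quotient.factor_mk] at this

end arith

section primepow
variable (L : Type) [Field L] [NumberField L] (η : ℕ)

lemma Rpow_ne_bot {𝔭 : Ideal ↥(Rring L η)} (hPb : 𝔭 ≠ ⊥) (e : ℕ) : 𝔭 ^ e ≠ ⊥ := by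
  intro h
  obtain ⟨x, hx, hx0⟩ := Submodule.ne_bot_iff _ |>.mp hPb
  have : x ^ e ∈ 𝔭 ^ e := Ideal.pow_mem_pow hx e
  rw [h, Submodule.mem_bot] at this
  exact hx0 ((pow_eq_zero_iff'.mp this).1)

lemma Rpow_nontrivial {𝔭 : Ideal ↥(Rring L η)} (hP : 𝔭.IsPrime) {e : ℕ} (he : 0 < e) :
    Nontrivial (↥(Rring L η) ⧸ 𝔭 ^ e) := by
  refine Ideal.Quotient.nontrivial_iff.mpr fun h => hP.ne_top ?_
  exact top_le_iff.mp (h ▸ Ideal.pow_le_self he.ne')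

lemma charRP_prime (hη : 0 < η) {𝔭 : Ideal ↥(Rring L η)} (hP : 𝔭.IsPrime) (hPb : 𝔭 ≠ ⊥) :
    (ringChar (↥(Rring L η) ⧸ 𝔭)).Prime := by
  haveI := quot_finite L η hη 𝔭 hPb
  haveI := hP
  exact CharP.char_is_prime (↥(Rring L η) ⧸ 𝔭) _

lemma char_mem {𝔭 : Ideal ↥(Rring L η)} :
    ((ringChar (↥(Rring L η) ⧸ 𝔭) : ℕ) : ↥(Rring L η)) ∈ 𝔭 := by
  apply Ideal.Quotient.eq_zero_iff_mem.mp
  rw [map_natCast]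
  exact CharP.cast_eq_zero _ _

lemma prime_dvd_card_iff (hη : 0 < η) {𝔭 : Ideal ↥(Rring L η)} (hP : 𝔭.IsPrime) (hPb : 𝔭 ≠ ⊥)
    {e : ℕ} (he : 0 < e) (q : ℕ) (hq : q.Prime) :
    q ∣ Nat.card (↥(Rring L η) ⧸ 𝔭 ^ e) ↔ q = ringChar (↥(Rring L η) ⧸ 𝔭) := by
  haveI := quot_finite L η hη (𝔭 ^ e) (Rpow_ne_bot L η hPb e)
  haveI := Rpow_nontrivial L η hP he
  haveI : Fintype (↥(Rring L η) ⧸ 𝔭 ^ e) := Fintype.ofFinite _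
  haveI : Fact q.Prime := ⟨hq⟩
  have hp : (ringChar (↥(Rring L η) ⧸ 𝔭)).Prime := charRP_prime L η hη hP hPb
  rw [Nat.card_eq_fintype_card, ← prime_dvd_char_iff_dvd_card q]
  constructor
  · intro hdvd
    have h1 : ((ringChar (↥(Rring L η) ⧸ 𝔭) ^ e : ℕ) : ↥(Rring L η) ⧸ 𝔭 ^ e) = 0 := by
      push_cast
      rw [← map_natCast (Ideal.Quotient.mk (𝔭 ^ e)), ← map_pow]
      exact Ideal.Quotient.eq_zero_iff_mem.mpr (Ideal.pow_mem_pow (char_mem L η) e)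
    have h2 : ringChar (↥(Rring L η) ⧸ 𝔭 ^ e) ∣ ringChar (↥(Rring L η) ⧸ 𝔭) ^ e :=
      (CharP.cast_eq_zero_iff _ (ringChar _) _).mp h1
    exact (Nat.prime_dvd_prime_iff_eq hq hp).mp (hq.dvd_of_dvd_pow (hdvd.trans h2))
  · rintro rfl
    have h4 : ((ringChar (↥(Rring L η) ⧸ 𝔭 ^ e) : ℕ) : ↥(Rring L η) ⧸ 𝔭 ^ e) = 0 :=
      CharP.cast_eq_zero _ _
    have h3 : ((ringChar (↥(Rring L η) ⧸ 𝔭 ^ e) : ℕ) : ↥(Rring L η) ⧸ 𝔭) = 0 := by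
      have := congrArg (Ideal.Quotient.factor (Ideal.pow_le_self he.ne')) h4
      rwa [map_natCast, map_zero] at this
    exact (CharP.cast_eq_zero_iff _ (ringChar _) _).mp h3

lemma degone_pow_iff (hη : 0 < η) {𝔭 : Ideal ↥(Rring L η)} (hP : 𝔭.IsPrime) (hPb : 𝔭 ≠ ⊥)
    {e : ℕ} (he : 0 < e) :
    Function.Surjective (Int.cast : ℤ → ↥(Rring L η) ⧸ 𝔭 ^ e) ↔
      (Function.Surjective (Int.cast : ℤ → ↥(Rring L η) ⧸ 𝔭) ∧ (RamifiedIdeal 𝔭 → e = 1)) := by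
  haveI := Rring_isDedekind L η hη
  haveI := quot_finite L η hη 𝔭 hPb
  constructor
  · intro hs
    refine ⟨surj_factor (Ideal.pow_le_self he.ne') hs, ?_⟩
    rintro ⟨p0, hp0, hp0mem, hp0dvd⟩
    by_contra hne1
    have he2 : 2 ≤ e := by omega
    have hs2 : Function.Surjective (Int.cast : ℤ → ↥(Rring L η) ⧸ 𝔭 ^ 2) :=
      surj_factor (Ideal.pow_le_pow_right he2) hs
    have hlt : 𝔭 ^ 2 < 𝔭 := Ideal.pow_lt_self 𝔭 hPb hP.ne_top 2 le_rfl
    obtain ⟨x, hx𝔭, hx2⟩ := SetLike.exists_of_lt hlt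
    obtain ⟨n, hn⟩ := hs2 (Ideal.Quotient.mk _ x)
    have hxn : ((n : ℤ) : ↥(Rring L η)) - x ∈ 𝔭 ^ 2 := by
      apply Ideal.Quotient.eq.mp
      rwa [map_intCast]
    have hn𝔭 : ((n : ℤ) : ↥(Rring L η)) ∈ 𝔭 := by
      have h1 : ((n : ℤ) : ↥(Rring L η)) - x ∈ 𝔭 := Ideal.pow_le_self two_ne_zero hxn
      simpa using 𝔭.add_mem h1 hx𝔭
    set p := ringChar (↥(Rring L η) ⧸ 𝔭) with hpdef
    haveI : CharP (↥(Rring L η) ⧸ 𝔭) p := ringChar.charP _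
    have hpn : (p : ℤ) ∣ n := by
      apply (CharP.intCast_eq_zero_iff (↥(Rring L η) ⧸ 𝔭) p n).mp
      have : Ideal.Quotient.mk 𝔭 ((n : ℤ) : ↥(Rring L η)) = 0 :=
        Ideal.Quotient.eq_zero_iff_mem.mpr hn𝔭
      rwa [map_intCast] at this
    have hpp0 : p = p0 := by
      have h0 : ((p0 : ℕ) : ↥(Rring L η) ⧸ 𝔭) = 0 := by
        rw [← map_natCast (Ideal.Quotient.mk 𝔭)]
        exact Ideal.Quotient.eq_zero_iff_mem.mpr hp0mem
      exact (Nat.prime_dvd_prime_iff_eq (charRP_prime L η hη hP hPb) hp0).mp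
        ((CharP.cast_eq_zero_iff _ p p0).mp h0)
    obtain ⟨k, hk⟩ := hpn
    have hspan : Ideal.span {((p0 : ℕ) : ↥(Rring L η))} ≤ 𝔭 ^ 2 := Ideal.le_of_dvd hp0dvd
    have hp0R : ((p0 : ℕ) : ↥(Rring L η)) ∈ 𝔭 ^ 2 := hspan (Ideal.subset_span rfl)
    have hnmem2 : ((n : ℤ) : ↥(Rring L η)) ∈ 𝔭 ^ 2 := by
      rw [hk]
      push_cast
      rw [hpp0]
      exact Ideal.mul_mem_right _ _ hp0R
    have : x ∈ 𝔭 ^ 2 := by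
      have h2 := (𝔭 ^ 2).sub_mem hnmem2 hxn
      simpa using h2
    exact hx2 this
  · rintro ⟨hs1, hram⟩
    by_cases hram' : RamifiedIdeal 𝔭
    · have he1 : e = 1 := hram hram'
      subst he1
      intro y
      obtain ⟨n, hn⟩ := hs1 ((Ideal.quotEquivOfEq (pow_one 𝔭)) y)
      refine ⟨n, ?_⟩
      apply (Ideal.quotEquivOfEq (pow_one 𝔭)).injective
      rw [map_intCast, hn]
    · set p := ringChar (↥(Rring L η) ⧸ 𝔭) with hpdef
      have hp : p.Prime := charRP_prime L η hη hP hPb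
      have hpmem : ((p : ℕ) : ↥(Rring L η)) ∈ 𝔭 := char_mem L η
      have hunram : ¬ (𝔭 ^ 2 ∣ Ideal.span {((p : ℕ) : ↥(Rring L η))}) :=
        fun hdvd => hram' ⟨p, hp, hpmem, hdvd⟩
      have hple : Ideal.span {((p : ℕ) : ↥(Rring L η))} ≤ 𝔭 :=
        (Ideal.span_singleton_le_iff_mem _).mpr hpmem
      obtain ⟨𝔠, h𝔠⟩ := Ideal.dvd_iff_le.mpr hple
      have h𝔠sup : 𝔭 ⊔ 𝔠 = ⊤ := by
        by_contra hne
        have hmax : 𝔭.IsMaximal := Ideal.IsPrime.isMaximal hP hPb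
        have heq : 𝔭 = 𝔭 ⊔ 𝔠 := Ideal.IsMaximal.eq_of_le hmax hne le_sup_left
        have h𝔠le : 𝔠 ≤ 𝔭 := le_trans le_sup_right heq.symm.le
        apply hunram
        rw [h𝔠, pow_two]
        exact mul_dvd_mul dvd_rfl (Ideal.dvd_iff_le.mpr h𝔠le)
      have key : ∀ k : ℕ, ∀ x : ↥(Rring L η), ∃ n : ℤ,
          x - ((n : ℤ) : ↥(Rring L η)) ∈ 𝔭 ^ (k + 1) := by
        intro k
        induction k with
        | zero =>
          intro x
          obtain ⟨n, hn⟩ := hs1 (Ideal.Quotient.mk 𝔭 x)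
          refine ⟨n, ?_⟩
          rw [zero_add, pow_one]
          have : Ideal.Quotient.mk 𝔭 ((n : ℤ) : ↥(Rring L η)) = Ideal.Quotient.mk 𝔭 x := by
            rw [map_intCast, hn]
          simpa using 𝔭.neg_mem (Ideal.Quotient.eq.mp this)
        | succ k ih =>
          intro x
          obtain ⟨n, hn⟩ := ih x
          have hcop : 𝔠 ^ (k + 1) ⊔ 𝔭 = ⊤ := by
            have h1 : IsCoprime 𝔭 𝔠 := Ideal.isCoprime_iff_sup_eq.mpr h𝔠sup
            exact Ideal.isCoprime_iff_sup_eq.mp (h1.symm.pow_left)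
          have hdecomp : Ideal.span {((p : ℕ) : ↥(Rring L η))} ^ (k + 1) ⊔ 𝔭 ^ (k + 2) =
              𝔭 ^ (k + 1) := by
            rw [h𝔠, mul_pow, pow_succ 𝔭 (k + 1), ← Ideal.mul_sup, hcop, Ideal.mul_top]
          rw [← hdecomp] at hn
          obtain ⟨y, hy, z, hz, hyz⟩ := Submodule.mem_sup.mp hn
          rw [Ideal.span_singleton_pow] at hy
          obtain ⟨w, hw⟩ := Ideal.mem_span_singleton'.mp hy
          obtain ⟨m, hm⟩ := hs1 (Ideal.Quotient.mk 𝔭 w)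
          have hwm : w - ((m : ℤ) : ↥(Rring L η)) ∈ 𝔭 := by
            have : Ideal.Quotient.mk 𝔭 ((m : ℤ) : ↥(Rring L η)) = Ideal.Quotient.mk 𝔭 w := by
              rw [map_intCast, hm]
            simpa using 𝔭.neg_mem (Ideal.Quotient.eq.mp this)
          refine ⟨n + m * (p : ℤ) ^ (k + 1), ?_⟩
          have heq2 : x - ((↑(n + m * (p : ℤ) ^ (k + 1)) : ℤ) : ↥(Rring L η)) =
              (w - ((m : ℤ) : ↥(Rring L η))) * ((p : ℕ) : ↥(Rring L η)) ^ (k + 1) + z := by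
            push_cast
            linear_combination -hyz - hw
          rw [heq2]
          apply Ideal.add_mem
          · have hp_pow : ((p : ℕ) : ↥(Rring L η)) ^ (k + 1) ∈ 𝔭 ^ (k + 1) :=
              Ideal.pow_mem_pow hpmem _
            have h5 := Ideal.mul_mem_mul hwm hp_pow
            rwa [← pow_succ'] at h5
          · exact hz
      intro y
      obtain ⟨x, rfl⟩ := Ideal.Quotient.mk_surjective y
      obtain ⟨n, hn⟩ := key (e - 1) x
      have hee : (e - 1) + 1 = e := by omega
      rw [hee] at hn
      have : Ideal.Quotient.mk (𝔭 ^ e) ((n : ℤ) : ↥(Rring L η)) = Ideal.Quotient.mk _ x :=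
        Ideal.Quotient.eq.mpr (by simpa using (𝔭 ^ e).neg_mem hn)
      exact ⟨n, by rw [← this, map_intCast]⟩

end primepow


open scoped Classical

theorem statement0 (L : Type) [Field L] [NumberField L] (η : ℕ) (hη : 0 < η)
    (𝔞 : Ideal ↥(Rring L η)) (hbot : 𝔞 ≠ ⊥) (htop : 𝔞 ≠ ⊤)
    (r : ℕ) (𝔭 : Fin r → Ideal ↥(Rring L η)) (e : Fin r → ℕ)
    (hp : ∀ i, (𝔭 i).IsPrime) (hpbot : ∀ i, 𝔭 i ≠ ⊥)
    (hinj : Function.Injective 𝔭) (hepos : ∀ i, 0 < e i)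
    (hfact : 𝔞 = ∏ i, 𝔭 i ^ e i) :
    DegOne 𝔞 ↔
      ((∀ i, DegOne (𝔭 i) ∧ (RamifiedIdeal (𝔭 i) → e i = 1)) ∧
        ∀ i j : Fin r, i < j → Nat.gcd (idealNorm (𝔭 i)) (idealNorm (𝔭 j)) = 1) := by
  haveI hDed := Rring_isDedekind L η hη
  haveI hFinP : ∀ i, Finite (↥(Rring L η) ⧸ 𝔭 i ^ e i) := fun i =>
    quot_finite L η hη _ (Rpow_ne_bot L η (hpbot i) _)
  haveI hNtP : ∀ i, Nontrivial (↥(Rring L η) ⧸ 𝔭 i ^ e i) := fun i =>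
    Rpow_nontrivial L η (hp i) (hepos i)
  haveI hFin1 : ∀ i, Finite (↥(Rring L η) ⧸ 𝔭 i) := fun i =>
    quot_finite L η hη _ (hpbot i)
  have hcast : ∀ (X : Type) [CommRing X], ⇑(Int.castRingHom X) = (Int.cast : ℤ → X) :=
    fun X _ => rfl
  let E := IsDedekindDomain.quotientEquivPiOfProdEq 𝔞 𝔭 e
    (fun i => Ideal.prime_of_isPrime (hpbot i) (hp i))
    (fun i j hij h => hij (hinj h)) hfact.symm
  have hstep1 : DegOne 𝔞 ↔
      Function.Surjective (Int.cast : ℤ → ∀ i, ↥(Rring L η) ⧸ 𝔭 i ^ e i) := by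
    constructor
    · rintro ⟨-, hs⟩
      rw [hcast] at hs
      intro t
      obtain ⟨y, hy⟩ := E.surjective t
      obtain ⟨n, hn⟩ := hs y
      exact ⟨n, by rw [← hy, ← hn, map_intCast]⟩
    · intro hs
      refine ⟨hbot, ?_⟩
      rw [hcast]
      intro y
      obtain ⟨n, hn⟩ := hs (E y)
      refine ⟨n, E.injective ?_⟩
      rw [map_intCast, hn]
  -- the small-card prime-divisor characterization
  have hsmall : ∀ i, ∀ q : ℕ, q.Prime →
      (q ∣ Nat.card (↥(Rring L η) ⧸ 𝔭 i) ↔ q = ringChar (↥(Rring L η) ⧸ 𝔭 i)) := by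
    intro i q hq
    have h1 := prime_dvd_card_iff L η hη (hp i) (hpbot i) (e := 1) one_pos q hq
    have hcc : Nat.card (↥(Rring L η) ⧸ 𝔭 i ^ 1) = Nat.card (↥(Rring L η) ⧸ 𝔭 i) :=
      Nat.card_congr (Ideal.quotEquivOfEq (pow_one (𝔭 i))).toEquiv
    rwa [hcc] at h1
  have hcard0 : ∀ i, Nat.card (↥(Rring L η) ⧸ 𝔭 i ^ e i) ≠ 0 := fun i =>
    Nat.card_pos.ne'
  have hcard0' : ∀ i, Nat.card (↥(Rring L η) ⧸ 𝔭 i) ≠ 0 := by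
    intro i
    haveI : Nontrivial (↥(Rring L η) ⧸ 𝔭 i) := Ideal.Quotient.nontrivial_iff.mpr (hp i).ne_top
    exact Nat.card_pos.ne'
  have hcopiff : ∀ i j, i ≠ j →
      (Nat.Coprime (Nat.card (↥(Rring L η) ⧸ 𝔭 i ^ e i))
          (Nat.card (↥(Rring L η) ⧸ 𝔭 j ^ e j)) ↔
        Nat.Coprime (Nat.card (↥(Rring L η) ⧸ 𝔭 i)) (Nat.card (↥(Rring L η) ⧸ 𝔭 j))) := by
    intro i j hij
    have hpi := charRP_prime L η hη (hp i) (hpbot i)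
    have hpj := charRP_prime L η hη (hp j) (hpbot j)
    rw [coprime_iff_charne hpi hpj (hcard0 i) (hcard0 j)
      (fun q hq => prime_dvd_card_iff L η hη (hp i) (hpbot i) (hepos i) q hq)
      (fun q hq => prime_dvd_card_iff L η hη (hp j) (hpbot j) (hepos j) q hq),
      coprime_iff_charne hpi hpj (hcard0' i) (hcard0' j) (hsmall i) (hsmall j)]
  rw [hstep1, surj_pi_iff]
  constructor
  · rintro ⟨h1, h2⟩
    constructor
    · intro i
      have h3 := (degone_pow_iff L η hη (hp i) (hpbot i) (hepos i)).mp (h1 i)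
      exact ⟨⟨hpbot i, by rw [hcast]; exact h3.1⟩, h3.2⟩
    · intro i j hij
      exact (hcopiff i j hij.ne).mp (h2 hij.ne)
  · rintro ⟨h1, h2⟩
    constructor
    · intro i
      apply (degone_pow_iff L η hη (hp i) (hpbot i) (hepos i)).mpr
      refine ⟨?_, (h1 i).2⟩
      have := (h1 i).1.2
      rwa [hcast] at this
    · intro i j hij
      apply (hcopiff i j hij).mpr
      rcases lt_or_gt_of_ne hij with h | h
      · exact h2 i j h
      · exact Nat.Coprime.symm (h2 j i h)
end general
end AuxGeneral
end

section
/- Let n = n₁n₂ with gcd(n₁, n₂) = 1 and gcd(n, η) = 1, and let n̄₁, n̄₂ be positive integers with n₁n̄₁ ≡ 1 (mod n₂) and n₂n̄₂ ≡ 1 (mod n₁). Then for every integer h, ρ_η(h, n) = ρ_η(hn̄₂, n₁) · ρ_η(hn̄₁, n₂). -/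
open NumberField Filter Asymptotics Topology

set_option maxHeartbeats 1000000
set_option synthInstance.maxHeartbeats 400000

section Aux

variable {A : Type} [CommRing A]

lemma cast_mk (𝔟 : Ideal A) (m : ℤ) :
    ((m : ℤ) : A ⧸ 𝔟) = Ideal.Quotient.mk 𝔟 ((m : ℤ) : A) :=
  (map_intCast (Ideal.Quotient.mk 𝔟) m).symm

lemma cast_mem_iff_ker (𝔟 : Ideal A) (m : ℤ) :
    ((m : ℤ) : A) ∈ 𝔟 ↔ m ∈ RingHom.ker (Int.castRingHom (A ⧸ 𝔟)) := by
  rw [RingHom.mem_ker, eq_intCast, cast_mk, Ideal.Quotient.eq_zero_iff_mem]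

lemma intKer_card (𝔟 : Ideal A)
    (hs : Function.Surjective ⇑(Int.castRingHom (A ⧸ 𝔟))) (d : ℕ)
    (hker : ∀ m : ℤ, ((m : ℤ) : A) ∈ 𝔟 ↔ (d : ℤ) ∣ m) :
    Nat.card (A ⧸ 𝔟) = d := by
  have hk : RingHom.ker (Int.castRingHom (A ⧸ 𝔟)) = Ideal.span {(d : ℤ)} := by
    ext m
    rw [Ideal.mem_span_singleton, ← cast_mem_iff_ker, hker]
  have e1 := RingHom.quotientKerEquivOfSurjective hs
  replace e1 := (Ideal.quotEquivOfEq hk).symm.trans e1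
  calc Nat.card (A ⧸ 𝔟) = Nat.card (ℤ ⧸ Ideal.span {((d : ℕ) : ℤ)}) :=
        (Nat.card_congr e1.toEquiv).symm
    _ = Nat.card (ZMod d) := Nat.card_congr (Int.quotientSpanNatEquivZMod d).toEquiv
    _ = d := Nat.card_zmod d

lemma mem_iff_dvd_of_degOne (𝔟 : Ideal A)
    (hs : Function.Surjective ⇑(Int.castRingHom (A ⧸ 𝔟))) {d : ℕ} (hd : 0 < d)
    (hcard : Nat.card (A ⧸ 𝔟) = d) (m : ℤ) : ((m : ℤ) : A) ∈ 𝔟 ↔ (d : ℤ) ∣ m := by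
  obtain ⟨a, ha⟩ := (IsPrincipalIdealRing.principal (RingHom.ker (Int.castRingHom (A ⧸ 𝔟)))).principal
  rw [Ideal.submodule_span_eq] at ha
  have e1 := RingHom.quotientKerEquivOfSurjective hs
  replace e1 := (Ideal.quotEquivOfEq ha).symm.trans e1
  have hcard2 : a.natAbs = d := by
    have : Nat.card (ℤ ⧸ Ideal.span ({a} : Set ℤ)) = d := by
      rw [Nat.card_congr e1.toEquiv, hcard]
    rwa [Nat.card_congr (Int.quotientSpanEquivZMod a).toEquiv, Nat.card_zmod] at this
  rw [cast_mem_iff_ker, ha, Ideal.mem_span_singleton, ← Int.natAbs_dvd, hcard2]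

lemma approx_int {𝔟 : Ideal A}
    (hs : Function.Surjective ⇑(Int.castRingHom (A ⧸ 𝔟))) (r : A) :
    ∃ s : ℤ, r - ((s : ℤ) : A) ∈ 𝔟 := by
  obtain ⟨s, hs'⟩ := hs (Ideal.Quotient.mk 𝔟 r)
  refine ⟨s, ?_⟩
  rw [← Ideal.Quotient.eq_zero_iff_mem, map_sub, ← cast_mk, ← eq_intCast (Int.castRingHom (A ⧸ 𝔟)) s, hs', sub_self]

lemma cast_eq_cast_of_dvd (𝔟 : Ideal A) {d : ℕ}
    (hmem : ∀ m : ℤ, ((m : ℤ) : A) ∈ 𝔟 ↔ (d : ℤ) ∣ m) {c a : ℤ} (hdvd : (d : ℤ) ∣ c - a) :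
    ((c : ℤ) : A ⧸ 𝔟) = ((a : ℤ) : A ⧸ 𝔟) := by
  have h0 : ((c - a : ℤ) : A ⧸ 𝔟) = 0 := by
    rw [cast_mk, Ideal.Quotient.eq_zero_iff_mem]
    exact (hmem _).mpr hdvd
  push_cast at h0
  linear_combination h0

end Aux

section Main

variable {L : Type} [Field L] [NumberField L] {η : ℕ}

lemma Rring.charZero : CharZero ↥(Rring L η) :=
  ⟨fun a b hab => Nat.cast_injective (R := L)
    (by simpa using congrArg (Subtype.val) hab)⟩

lemma Rring.nontrivial : Nontrivial ↥(Rring L η) := by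
  haveI := Rring.charZero (L := L) (η := η)
  infer_instance

lemma mem_sset_cast_iff {n : ℕ} (hn : 0 < n) {𝔞 : Ideal ↥(Rring L η)}
    (h𝔞 : 𝔞 ∈ Sset L η n) (m : ℤ) : ((m : ℤ) : ↥(Rring L η)) ∈ 𝔞 ↔ (n : ℤ) ∣ m :=
  mem_iff_dvd_of_degOne 𝔞 h𝔞.1.2 hn h𝔞.2 m

lemma mem_sup_span {n d : ℕ} (hn : 0 < n) (hd : d ∣ n) {𝔞 : Ideal ↥(Rring L η)}
    (h𝔞 : 𝔞 ∈ Sset L η n) (m : ℤ) :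
    ((m : ℤ) : ↥(Rring L η)) ∈ 𝔞 ⊔ Ideal.span {((d : ℕ) : ↥(Rring L η))} ↔ (d : ℤ) ∣ m := by
  constructor
  · intro hm
    rw [Submodule.mem_sup] at hm
    obtain ⟨y, hy, z, hz, hyz⟩ := hm
    rw [Ideal.mem_span_singleton] at hz
    obtain ⟨r, hr⟩ := hz
    obtain ⟨s, hrs⟩ := approx_int h𝔞.1.2 r
    have key : ((m - d * s : ℤ) : ↥(Rring L η)) ∈ 𝔞 := by
      have heq : ((m - d * s : ℤ) : ↥(Rring L η))
          = y + ((d : ℕ) : ↥(Rring L η)) * (r - ((s : ℤ) : ↥(Rring L η))) := by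
        push_cast
        linear_combination hr - hyz
      rw [heq]
      exact Ideal.add_mem _ hy (Ideal.mul_mem_left _ _ hrs)
    have hnd : (n : ℤ) ∣ m - d * s := (mem_sset_cast_iff hn h𝔞 _).mp key
    have hdd : (d : ℤ) ∣ m - d * s := dvd_trans (Int.natCast_dvd_natCast.mpr hd) hnd
    have : (d : ℤ) ∣ (m - d * s) + d * s := Dvd.dvd.add hdd (Dvd.intro s rfl)
    simpa using this
  · rintro ⟨c, hc⟩
    apply Submodule.mem_sup_right
    rw [Ideal.mem_span_singleton]
    exact ⟨((c : ℤ) : ↥(Rring L η)), by rw [hc]; push_cast; ring⟩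

lemma sup_mem_sset {n d : ℕ} (hn : 0 < n) (hd : d ∣ n) {𝔞 : Ideal ↥(Rring L η)}
    (h𝔞 : 𝔞 ∈ Sset L η n) :
    𝔞 ⊔ Ideal.span {((d : ℕ) : ↥(Rring L η))} ∈ Sset L η d := by
  set 𝔞' := 𝔞 ⊔ Ideal.span {((d : ℕ) : ↥(Rring L η))} with h𝔞'
  have hsurj : Function.Surjective ⇑(Int.castRingHom (↥(Rring L η) ⧸ 𝔞')) := by
    intro x
    obtain ⟨r, hr⟩ := Ideal.Quotient.mk_surjective x
    obtain ⟨s, hrs⟩ := approx_int h𝔞.1.2 r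
    refine ⟨s, ?_⟩
    rw [eq_intCast, cast_mk, ← hr]
    exact (Ideal.Quotient.mk_eq_mk_iff_sub_mem _ _).mpr
      (Submodule.mem_sup_left (by simpa using 𝔞.neg_mem hrs))
  refine ⟨⟨?_, hsurj⟩, ?_⟩
  · intro hbot
    exact h𝔞.1.1 (le_bot_iff.mp (hbot ▸ (le_sup_left : 𝔞 ≤ 𝔞')))
  · exact intKer_card 𝔞' hsurj d (mem_sup_span hn hd h𝔞)

end Main

section Main2

variable {L : Type} [Field L] [NumberField L] {η : ℕ}

lemma inf_sup_eq_self {n n₁ n₂ : ℕ} (hn : n = n₁ * n₂) (h1 : 0 < n₁) (h2 : 0 < n₂)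
    (hcop : Nat.Coprime n₁ n₂) {𝔞 : Ideal ↥(Rring L η)} (h𝔞 : 𝔞 ∈ Sset L η n) :
    (𝔞 ⊔ Ideal.span {((n₁ : ℕ) : ↥(Rring L η))}) ⊓ (𝔞 ⊔ Ideal.span {((n₂ : ℕ) : ↥(Rring L η))})
      = 𝔞 := by
  have hnpos : 0 < n := hn ▸ Nat.mul_pos h1 h2
  apply le_antisymm
  · rintro x ⟨hx1, hx2⟩
    obtain ⟨s, hxs⟩ := approx_int h𝔞.1.2 x
    have hs1 : ((s : ℤ) : ↥(Rring L η)) ∈ 𝔞 ⊔ Ideal.span {((n₁ : ℕ) : ↥(Rring L η))} := by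
      have hx : ((s : ℤ) : ↥(Rring L η)) = x - (x - ((s : ℤ) : ↥(Rring L η))) := by ring
      rw [hx]
      exact Submodule.sub_mem _ hx1 (Submodule.mem_sup_left hxs)
    have hs2 : ((s : ℤ) : ↥(Rring L η)) ∈ 𝔞 ⊔ Ideal.span {((n₂ : ℕ) : ↥(Rring L η))} := by
      have hx : ((s : ℤ) : ↥(Rring L η)) = x - (x - ((s : ℤ) : ↥(Rring L η))) := by ring
      rw [hx]
      exact Submodule.sub_mem _ hx2 (Submodule.mem_sup_left hxs)
    have hd1 : (n₁ : ℤ) ∣ s := (mem_sup_span hnpos ⟨n₂, hn⟩ h𝔞 s).mp hs1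
    have hd2 : (n₂ : ℤ) ∣ s := (mem_sup_span hnpos ⟨n₁, by rw [hn, mul_comm]⟩ h𝔞 s).mp hs2
    have hdn : (n : ℤ) ∣ s := by
      rw [hn]
      push_cast
      exact (Nat.isCoprime_iff_coprime.mpr hcop).mul_dvd hd1 hd2
    have hsmem : ((s : ℤ) : ↥(Rring L η)) ∈ 𝔞 := (mem_sset_cast_iff hnpos h𝔞 s).mpr hdn
    have hx : x = (x - ((s : ℤ) : ↥(Rring L η))) + ((s : ℤ) : ↥(Rring L η)) := by ring
    rw [hx]
    exact Submodule.add_mem _ hxs hsmem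
  · exact le_inf le_sup_left le_sup_left

lemma inf_mem_sset {n₁ n₂ : ℕ} (h1 : 0 < n₁) (h2 : 0 < n₂)
    (hcop : Nat.Coprime n₁ n₂) (nb₁ nb₂ : ℕ)
    (hc₁ : n₁ * nb₁ ≡ 1 [MOD n₂]) (hc₂ : n₂ * nb₂ ≡ 1 [MOD n₁])
    {𝔞₁ 𝔞₂ : Ideal ↥(Rring L η)} (h𝔞₁ : 𝔞₁ ∈ Sset L η n₁) (h𝔞₂ : 𝔞₂ ∈ Sset L η n₂) :
    𝔞₁ ⊓ 𝔞₂ ∈ Sset L η (n₁ * n₂) := by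
  haveI : CharZero ↥(Rring L η) := Rring.charZero
  obtain ⟨a, b, hab⟩ := Nat.isCoprime_iff_coprime.mpr hcop
  have hn1mem : ((n₁ : ℕ) : ↥(Rring L η)) ∈ 𝔞₁ := by
    have := (mem_sset_cast_iff h1 h𝔞₁ (n₁ : ℤ)).mpr dvd_rfl
    simpa using this
  have hn2mem : ((n₂ : ℕ) : ↥(Rring L η)) ∈ 𝔞₂ := by
    have := (mem_sset_cast_iff h2 h𝔞₂ (n₂ : ℤ)).mpr dvd_rfl
    simpa using this
  have hco : IsCoprime 𝔞₁ 𝔞₂ := by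
    rw [Ideal.isCoprime_iff_sup_eq, Ideal.eq_top_iff_one]
    have h1' : ((a : ℤ) : ↥(Rring L η)) * ((n₁ : ℕ) : ↥(Rring L η)) ∈ 𝔞₁ ⊔ 𝔞₂ :=
      Submodule.mem_sup_left (Ideal.mul_mem_left _ _ hn1mem)
    have h2' : ((b : ℤ) : ↥(Rring L η)) * ((n₂ : ℕ) : ↥(Rring L η)) ∈ 𝔞₁ ⊔ 𝔞₂ :=
      Submodule.mem_sup_right (Ideal.mul_mem_left _ _ hn2mem)
    have h3 : ((a : ℤ) : ↥(Rring L η)) * ((n₁ : ℕ) : ↥(Rring L η))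
        + ((b : ℤ) : ↥(Rring L η)) * ((n₂ : ℕ) : ↥(Rring L η)) = 1 := by
      exact_mod_cast congrArg (fun t : ℤ => ((t : ℤ) : ↥(Rring L η))) hab
    rw [← h3]
    exact Submodule.add_mem _ h1' h2'
  set e := Ideal.quotientInfEquivQuotientProd 𝔞₁ 𝔞₂ hco with he
  have hsurj : Function.Surjective ⇑(Int.castRingHom (↥(Rring L η) ⧸ (𝔞₁ ⊓ 𝔞₂))) := by
    intro z
    obtain ⟨s, hs1⟩ := h𝔞₁.1.2 (e z).1
    obtain ⟨t, ht1⟩ := h𝔞₂.1.2 (e z).2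
    refine ⟨s * (n₂ * nb₂) + t * (n₁ * nb₁), ?_⟩
    rw [eq_intCast]
    apply e.injective
    rw [map_intCast]
    have hfst : (((s * (n₂ * nb₂) + t * (n₁ * nb₁) : ℤ)) : (↥(Rring L η) ⧸ 𝔞₁) × (↥(Rring L η) ⧸ 𝔞₂)).1
        = ((s * (n₂ * nb₂) + t * (n₁ * nb₁) : ℤ) : ↥(Rring L η) ⧸ 𝔞₁) := Prod.fst_intCast _
    have hsnd : (((s * (n₂ * nb₂) + t * (n₁ * nb₁) : ℤ)) : (↥(Rring L η) ⧸ 𝔞₁) × (↥(Rring L η) ⧸ 𝔞₂)).2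
        = ((s * (n₂ * nb₂) + t * (n₁ * nb₁) : ℤ) : ↥(Rring L η) ⧸ 𝔞₂) := Prod.snd_intCast _
    have hd1 : (n₁ : ℤ) ∣ (s * (n₂ * nb₂) + t * (n₁ * nb₁)) - s := by
      have hdc : (n₁ : ℤ) ∣ ((n₂ * nb₂ : ℕ) : ℤ) - ((1 : ℕ) : ℤ) := (Nat.modEq_iff_dvd).mp hc₂.symm
      push_cast at hdc
      have heq2 : (s * (n₂ * nb₂) + t * (n₁ * nb₁)) - s
          = s * ((n₂ : ℤ) * nb₂ - 1) + (n₁ : ℤ) * (t * nb₁) := by push_cast; ring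
      rw [heq2]
      exact dvd_add (Dvd.dvd.mul_left hdc s) (Dvd.intro _ rfl)
    have hd2 : (n₂ : ℤ) ∣ (s * (n₂ * nb₂) + t * (n₁ * nb₁)) - t := by
      have hdc : (n₂ : ℤ) ∣ ((n₁ * nb₁ : ℕ) : ℤ) - ((1 : ℕ) : ℤ) := (Nat.modEq_iff_dvd).mp hc₁.symm
      push_cast at hdc
      have heq2 : (s * (n₂ * nb₂) + t * (n₁ * nb₁)) - t
          = t * ((n₁ : ℤ) * nb₁ - 1) + (n₂ : ℤ) * (s * nb₂) := by push_cast; ring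
      rw [heq2]
      exact dvd_add (Dvd.dvd.mul_left hdc t) (Dvd.intro _ rfl)
    apply Prod.ext
    · rw [hfst]
      rw [cast_eq_cast_of_dvd 𝔞₁ (mem_sset_cast_iff h1 h𝔞₁) hd1]
      rw [← eq_intCast (Int.castRingHom (↥(Rring L η) ⧸ 𝔞₁)) s, hs1]
    · rw [hsnd]
      rw [cast_eq_cast_of_dvd 𝔞₂ (mem_sset_cast_iff h2 h𝔞₂) hd2]
      rw [← eq_intCast (Int.castRingHom (↥(Rring L η) ⧸ 𝔞₂)) t, ht1]
  refine ⟨⟨?_, hsurj⟩, ?_⟩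
  · intro hbot
    have : ((n₁ * n₂ : ℕ) : ↥(Rring L η)) ∈ 𝔞₁ ⊓ 𝔞₂ := by
      rw [Nat.cast_mul]
      constructor
      · exact Ideal.mul_mem_right _ _ hn1mem
      · exact Ideal.mul_mem_left _ _ hn2mem
    rw [hbot, Ideal.mem_bot] at this
    exact (Nat.cast_ne_zero.mpr (Nat.mul_pos h1 h2).ne') this
  · show Nat.card _ = n₁ * n₂
    rw [Nat.card_congr e.toEquiv, Nat.card_prod]
    rw [show Nat.card (↥(Rring L η) ⧸ 𝔞₁) = n₁ from h𝔞₁.2,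
        show Nat.card (↥(Rring L η) ⧸ 𝔞₂) = n₂ from h𝔞₂.2]

lemma sset_inf_sup_left {n₁ n₂ : ℕ} (h1 : 0 < n₁) (h2 : 0 < n₂) (hcop : Nat.Coprime n₁ n₂)
    {𝔞₁ 𝔞₂ : Ideal ↥(Rring L η)} (h𝔞₁ : 𝔞₁ ∈ Sset L η n₁) (h𝔞₂ : 𝔞₂ ∈ Sset L η n₂) :
    (𝔞₁ ⊓ 𝔞₂) ⊔ Ideal.span {((n₁ : ℕ) : ↥(Rring L η))} = 𝔞₁ := by
  obtain ⟨a, b, hab⟩ := Nat.isCoprime_iff_coprime.mpr hcop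
  have hn1mem : ((n₁ : ℕ) : ↥(Rring L η)) ∈ 𝔞₁ := by
    have := (mem_sset_cast_iff h1 h𝔞₁ (n₁ : ℤ)).mpr dvd_rfl
    simpa using this
  have hn2mem : ((n₂ : ℕ) : ↥(Rring L η)) ∈ 𝔞₂ := by
    have := (mem_sset_cast_iff h2 h𝔞₂ (n₂ : ℤ)).mpr dvd_rfl
    simpa using this
  apply le_antisymm
  · apply sup_le inf_le_left
    rw [Ideal.span_le, Set.singleton_subset_iff]
    exact hn1mem
  · intro x hx
    have hone : (1 : ↥(Rring L η)) ∈ Ideal.span {((n₁ : ℕ) : ↥(Rring L η))} ⊔ 𝔞₂ := by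
      have h1' : ((a : ℤ) : ↥(Rring L η)) * ((n₁ : ℕ) : ↥(Rring L η))
          ∈ Ideal.span {((n₁ : ℕ) : ↥(Rring L η))} ⊔ 𝔞₂ :=
        Submodule.mem_sup_left (Ideal.mul_mem_left _ _ (Ideal.subset_span rfl))
      have h2' : ((b : ℤ) : ↥(Rring L η)) * ((n₂ : ℕ) : ↥(Rring L η))
          ∈ Ideal.span {((n₁ : ℕ) : ↥(Rring L η))} ⊔ 𝔞₂ :=
        Submodule.mem_sup_right (Ideal.mul_mem_left _ _ hn2mem)
      have h3 : ((a : ℤ) : ↥(Rring L η)) * ((n₁ : ℕ) : ↥(Rring L η))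
          + ((b : ℤ) : ↥(Rring L η)) * ((n₂ : ℕ) : ↥(Rring L η)) = 1 := by
        exact_mod_cast congrArg (fun t : ℤ => ((t : ℤ) : ↥(Rring L η))) hab
      rw [← h3]
      exact Submodule.add_mem _ h1' h2'
    rw [Submodule.mem_sup] at hone
    obtain ⟨u, hu, v, hv, huv⟩ := hone
    have hxuv : x = x * v + x * u := by
      have : x * (u + v) = x * 1 := by rw [huv]
      rw [mul_one] at this
      linear_combination -this
    rw [hxuv]
    apply Submodule.add_mem
    · exact Submodule.mem_sup_left ⟨Ideal.mul_mem_right _ _ hx, Ideal.mul_mem_left _ _ hv⟩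
    · exact Submodule.mem_sup_right (Ideal.mul_mem_left _ _ hu)

end Main2

section Main3

variable {L : Type} [Field L] [NumberField L] {η : ℕ}

lemma sset_one : Sset L η 1 = {(⊤ : Ideal ↥(Rring L η))} := by
  haveI : CharZero ↥(Rring L η) := Rring.charZero
  ext 𝔞
  simp only [Set.mem_singleton_iff]
  constructor
  · rintro ⟨-, hcard⟩
    have : Nat.card (↥(Rring L η) ⧸ 𝔞) = 1 := hcard
    rw [Nat.card_eq_one_iff_unique] at this
    rw [Ideal.eq_top_iff_one, ← Ideal.Quotient.eq_zero_iff_mem]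
    exact this.1.elim _ _
  · rintro rfl
    haveI : Subsingleton (↥(Rring L η) ⧸ (⊤ : Ideal ↥(Rring L η))) := by
      constructor
      intro x y
      obtain ⟨x', rfl⟩ := Ideal.Quotient.mk_surjective x
      obtain ⟨y', rfl⟩ := Ideal.Quotient.mk_surjective y
      exact (Ideal.Quotient.mk_eq_mk_iff_sub_mem _ _).mpr trivial
    refine ⟨⟨?_, fun x => ⟨0, Subsingleton.elim _ _⟩⟩, ?_⟩
    · intro hbot
      have h01 : (1 : ↥(Rring L η)) ∈ (⊤ : Ideal ↥(Rring L η)) := trivial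
      rw [hbot, Ideal.mem_bot] at h01
      exact one_ne_zero h01
    · show Nat.card _ = 1
      rw [Nat.card_eq_one_iff_unique]
      exact ⟨inferInstance, ⟨0⟩⟩

lemma sset_finite (hη : 0 < η) (n : ℕ) (hn : 0 < n) (hnη : Nat.Coprime n η) :
    (Sset L η n).Finite := by
  -- the quotient R ⧸ (n) is finite
  set I : Ideal ↥(Rring L η) := Ideal.span {((n : ℕ) : ↥(Rring L η))} with hI
  set f₀ : (𝓞 L) →+* ↥(Rring L η) ⧸ I :=
    (Ideal.Quotient.mk I).comp (algebraMap (𝓞 L) ↥(Rring L η)) with hf₀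
  have hηL : ((η : ℕ) : L) ≠ 0 := Nat.cast_ne_zero.mpr hη.ne'
  have hmemη : ((η : L))⁻¹ ∈ Rring L η := Algebra.self_mem_adjoin_singleton _ _
  set einv : ↥(Rring L η) := ⟨((η : L))⁻¹, hmemη⟩ with heinv
  have hη_einv : ((η : ℕ) : ↥(Rring L η)) * einv = 1 := by
    apply Subtype.ext
    show ((η : ℕ) : L) * ((η : L))⁻¹ = 1
    exact mul_inv_cancel₀ hηL
  obtain ⟨a, b, hab⟩ := Nat.isCoprime_iff_coprime.mpr hnη.symm
  -- a * η + b * n = 1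
  have heinv_mem : Ideal.Quotient.mk I einv ∈ f₀.range := by
    have key : einv - ((a : ℤ) : ↥(Rring L η)) = ((n : ℕ) : ↥(Rring L η)) * (((b : ℤ) : ↥(Rring L η)) * einv) := by
      have h3 : ((a : ℤ) : ↥(Rring L η)) * ((η : ℕ) : ↥(Rring L η))
          + ((b : ℤ) : ↥(Rring L η)) * ((n : ℕ) : ↥(Rring L η)) = 1 := by
        exact_mod_cast congrArg (fun t : ℤ => ((t : ℤ) : ↥(Rring L η))) hab
      calc einv - ((a : ℤ) : ↥(Rring L η))
          = einv * (1 - ((a : ℤ) : ↥(Rring L η)) * ((η : ℕ) : ↥(Rring L η)))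
            + ((a : ℤ) : ↥(Rring L η)) * (((η : ℕ) : ↥(Rring L η)) * einv - 1) := by ring
        _ = _ := by rw [hη_einv, ← h3]; ring
    have hmm : Ideal.Quotient.mk I einv = Ideal.Quotient.mk I ((a : ℤ) : ↥(Rring L η)) := by
      rw [Ideal.Quotient.mk_eq_mk_iff_sub_mem, key]
      exact Ideal.mul_mem_right _ _ (Ideal.subset_span rfl)
    rw [hmm, ← cast_mk]
    refine ⟨((a : ℤ) : 𝓞 L), ?_⟩
    rw [hf₀, RingHom.comp_apply, map_intCast, cast_mk]
  have hsurj : Function.Surjective ⇑f₀ := by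
    intro y
    obtain ⟨x, rfl⟩ := Ideal.Quotient.mk_surjective y
    suffices hmem : Ideal.Quotient.mk I x ∈ f₀.range by exact hmem
    refine Algebra.adjoin_induction (p := fun y hy => Ideal.Quotient.mk I (⟨y, hy⟩ : ↥(Rring L η)) ∈ f₀.range) ?_ ?_ ?_ ?_ x.2
    · intro z hz
      rcases hz with rfl
      exact heinv_mem
    · intro r
      exact ⟨r, rfl⟩
    · intro u v _ _ hu hv
      have := add_mem hu hv
      rw [← map_add] at this
      exact this
    · intro u v _ _ hu hv
      have := mul_mem hu hv
      rw [← map_mul] at this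
      exact this
  -- finiteness of 𝓞 L ⧸ (n)
  haveI : Fintype ((𝓞 L) ⧸ (Ideal.span {((n : ℕ) : 𝓞 L)} : Ideal (𝓞 L))) := by
    refine @Fintype.ofFinite _ (Ideal.finiteQuotientOfFreeOfNeBot _ (fun hbot => ?_))
    rw [Ideal.span_singleton_eq_bot] at hbot
    exact (Nat.cast_ne_zero.mpr hn.ne') hbot
  have hkill : ∀ x ∈ (Ideal.span {((n : ℕ) : 𝓞 L)} : Ideal (𝓞 L)), f₀ x = 0 := by
    intro x hx
    rw [Ideal.mem_span_singleton] at hx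
    obtain ⟨c, rfl⟩ := hx
    rw [map_mul]
    have : f₀ ((n : ℕ) : 𝓞 L) = 0 := by
      rw [hf₀, RingHom.comp_apply, map_natCast, Ideal.Quotient.eq_zero_iff_mem]
      exact Ideal.subset_span rfl
    rw [this, zero_mul]
  haveI hQfin : Finite (↥(Rring L η) ⧸ I) := by
    have hgs : Function.Surjective
        ⇑(Ideal.Quotient.lift (Ideal.span {((n : ℕ) : 𝓞 L)}) f₀ hkill) := by
      intro y
      obtain ⟨x, hx⟩ := hsurj y
      exact ⟨Ideal.Quotient.mk _ x, by rwa [Ideal.Quotient.lift_mk]⟩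
    exact Finite.of_surjective _ hgs
  haveI : Finite (Ideal (↥(Rring L η) ⧸ I)) :=
    Finite.of_injective (fun J => (J : Set (↥(Rring L η) ⧸ I))) SetLike.coe_injective
  apply Set.Finite.of_finite_image (f := fun 𝔞 => Ideal.map (Ideal.Quotient.mk I) 𝔞)
  · exact Set.toFinite _
  · intro 𝔞 h𝔞 𝔟 h𝔟 hmap
    have hrec : ∀ 𝔠 ∈ Sset L η n, Ideal.comap (Ideal.Quotient.mk I)
        (Ideal.map (Ideal.Quotient.mk I) 𝔠) = 𝔠 := by
      intro 𝔠 h𝔠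
      rw [Ideal.comap_map_of_surjective _ Ideal.Quotient.mk_surjective,
        show Ideal.comap (Ideal.Quotient.mk I) ⊥ = I from Ideal.mk_ker]
      have hIle : I ≤ 𝔠 := by
        rw [hI, Ideal.span_le, Set.singleton_subset_iff]
        have := (mem_sset_cast_iff hn h𝔠 (n : ℤ)).mpr dvd_rfl
        simpa using this
      exact sup_eq_left.mpr hIle
    have hmap' : Ideal.map (Ideal.Quotient.mk I) 𝔞 = Ideal.map (Ideal.Quotient.mk I) 𝔟 := hmap
    rw [← hrec 𝔞 h𝔞, ← hrec 𝔟 h𝔟, hmap']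

end Main3

section Main4

variable {L : Type} [Field L] [NumberField L] {η : ℕ}

lemma rhoSum_singleton (res : Ideal ↥(Rring L η) → ℕ)
    (hres : ∀ 𝔞 : Ideal ↥(Rring L η), DegOne 𝔞 →
      res 𝔞 < idealNorm 𝔞 ∧ True)
    (h' : ℤ) : rhoSum L η res h' 1 = 1 := by
  have htop : (⊤ : Ideal ↥(Rring L η)) ∈ Sset L η 1 := by rw [sset_one]; rfl
  have hres0 : res (⊤ : Ideal ↥(Rring L η)) = 0 := by
    have hlt := (hres ⊤ htop.1).1
    rw [htop.2] at hlt
    exact Nat.lt_one_iff.mp hlt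
  unfold rhoSum
  rw [sset_one, finsum_mem_singleton, hres0]
  simp

lemma term_eq {n₁ n₂ : ℕ} (h1 : 0 < n₁) (h2 : 0 < n₂) (hcop : Nat.Coprime n₁ n₂)
    (nb₁ nb₂ : ℕ) (hc₁ : n₁ * nb₁ ≡ 1 [MOD n₂]) (hc₂ : n₂ * nb₂ ≡ 1 [MOD n₁]) (h : ℤ)
    (r r₁ r₂ : ℕ) (hd1 : (n₁ : ℤ) ∣ (r₁ : ℤ) - (r : ℤ)) (hd2 : (n₂ : ℤ) ∣ (r₂ : ℤ) - (r : ℤ)) :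
    Complex.exp (2 * (Real.pi : ℂ) * Complex.I * (h : ℂ) * (r : ℂ) / ((n₁ * n₂ : ℕ) : ℂ))
      = Complex.exp (2 * (Real.pi : ℂ) * Complex.I * ((h * (nb₂ : ℤ) : ℤ) : ℂ) * (r₁ : ℂ) / ((n₁ : ℕ) : ℂ))
        * Complex.exp (2 * (Real.pi : ℂ) * Complex.I * ((h * (nb₁ : ℤ) : ℤ) : ℂ) * (r₂ : ℂ) / ((n₂ : ℕ) : ℂ)) := by
  have hdc2 : (n₁ : ℤ) ∣ (n₂ : ℤ) * (nb₂ : ℤ) - 1 := by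
    have := (Nat.modEq_iff_dvd).mp hc₂.symm
    push_cast at this
    exact this
  have hdc1 : (n₂ : ℤ) ∣ (n₁ : ℤ) * (nb₁ : ℤ) - 1 := by
    have := (Nat.modEq_iff_dvd).mp hc₁.symm
    push_cast at this
    exact this
  have hv1 : (n₁ : ℤ) ∣ (n₂ : ℤ) * nb₂ * r₁ + (n₁ : ℤ) * nb₁ * r₂ - r := by
    have hXeq : (n₂ : ℤ) * nb₂ * r₁ + (n₁ : ℤ) * nb₁ * r₂ - r
        = ((n₂ : ℤ) * nb₂ - 1) * r₁ + (n₁ : ℤ) * (nb₁ * r₂) + ((r₁ : ℤ) - r) := by ring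
    rw [hXeq]
    exact dvd_add (dvd_add (hdc2.mul_right _) (Dvd.intro _ rfl)) hd1
  have hv2 : (n₂ : ℤ) ∣ (n₂ : ℤ) * nb₂ * r₁ + (n₁ : ℤ) * nb₁ * r₂ - r := by
    have hXeq : (n₂ : ℤ) * nb₂ * r₁ + (n₁ : ℤ) * nb₁ * r₂ - r
        = ((n₁ : ℤ) * nb₁ - 1) * r₂ + (n₂ : ℤ) * (nb₂ * r₁) + ((r₂ : ℤ) - r) := by ring
    rw [hXeq]
    exact dvd_add (dvd_add (hdc1.mul_right _) (Dvd.intro _ rfl)) hd2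
  obtain ⟨k, hk⟩ : ((n₁ : ℤ) * n₂) ∣ h * ((n₂ : ℤ) * nb₂ * r₁ + (n₁ : ℤ) * nb₁ * r₂ - r) :=
    Dvd.dvd.mul_left ((Nat.isCoprime_iff_coprime.mpr hcop).mul_dvd hv1 hv2) h
  have hn1 : ((n₁ : ℕ) : ℂ) ≠ 0 := Nat.cast_ne_zero.mpr h1.ne'
  have hn2 : ((n₂ : ℕ) : ℂ) ≠ 0 := Nat.cast_ne_zero.mpr h2.ne'
  have hkC : (h : ℂ) * ((n₂ : ℂ) * (nb₂ : ℂ) * (r₁ : ℂ) + (n₁ : ℂ) * (nb₁ : ℂ) * (r₂ : ℂ) - (r : ℂ))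
      = (n₁ : ℂ) * (n₂ : ℂ) * (k : ℂ) := by
    have := congrArg (fun t : ℤ => (t : ℂ)) hk
    push_cast at this
    exact this
  rw [← Complex.exp_add]
  have harg : 2 * (Real.pi : ℂ) * Complex.I * ((h * (nb₂ : ℤ) : ℤ) : ℂ) * (r₁ : ℂ) / ((n₁ : ℕ) : ℂ)
      + 2 * (Real.pi : ℂ) * Complex.I * ((h * (nb₁ : ℤ) : ℤ) : ℂ) * (r₂ : ℂ) / ((n₂ : ℕ) : ℂ)
      = 2 * (Real.pi : ℂ) * Complex.I * (h : ℂ) * (r : ℂ) / ((n₁ * n₂ : ℕ) : ℂ)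
        + (k : ℂ) * (2 * (Real.pi : ℂ) * Complex.I) := by
    push_cast
    field_simp
    linear_combination hkC
  rw [harg, Complex.exp_add, Complex.exp_int_mul_two_pi_mul_I, mul_one]

end Main4

open scoped Classical

theorem statement6 (L : Type) [Field L] [NumberField L] (η : ℕ) (hη : 0 < η)
    (α : ↥(Rring L η))
    (res : Ideal ↥(Rring L η) → ℕ)
    (hres : ∀ 𝔞 : Ideal ↥(Rring L η), DegOne 𝔞 →
      res 𝔞 < idealNorm 𝔞 ∧ α - ((res 𝔞 : ℕ) : ↥(Rring L η)) ∈ 𝔞)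
    (n n₁ n₂ : ℕ) (hn : n = n₁ * n₂) (hcop : Nat.Coprime n₁ n₂) (hnη : Nat.Coprime n η)
    (nb₁ nb₂ : ℕ) (hb₁ : 0 < nb₁) (hb₂ : 0 < nb₂)
    (hc₁ : n₁ * nb₁ ≡ 1 [MOD n₂]) (hc₂ : n₂ * nb₂ ≡ 1 [MOD n₁])
    (h : ℤ) :
    rhoSum L η res h n = rhoSum L η res (h * (nb₂ : ℤ)) n₁ * rhoSum L η res (h * (nb₁ : ℤ)) n₂ := by
  have hres' : ∀ 𝔞 : Ideal ↥(Rring L η), DegOne 𝔞 → res 𝔞 < idealNorm 𝔞 ∧ True :=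
    fun 𝔞 h𝔞 => ⟨(hres 𝔞 h𝔞).1, trivial⟩
  rcases Nat.eq_zero_or_pos n₁ with h1 | h1
  · subst h1
    have hn2 : n₂ = 1 := Nat.coprime_zero_left _ |>.mp hcop
    subst hn2
    simp only [Nat.zero_mul] at hn
    subst hn
    rw [rhoSum_singleton res hres', mul_one]
    unfold rhoSum
    norm_num
  rcases Nat.eq_zero_or_pos n₂ with h2 | h2
  · subst h2
    have hn1 : n₁ = 1 := Nat.coprime_zero_right _ |>.mp hcop
    subst hn1
    simp only [Nat.mul_zero] at hn
    subst hn
    rw [rhoSum_singleton res hres', one_mul]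
    unfold rhoSum
    norm_num
  subst hn
  have hnpos : 0 < n₁ * n₂ := Nat.mul_pos h1 h2
  have hd₁ : n₁ ∣ n₁ * n₂ := ⟨n₂, rfl⟩
  have hd₂ : n₂ ∣ n₁ * n₂ := ⟨n₁, mul_comm n₁ n₂⟩
  have hf : (Sset L η (n₁ * n₂)).Finite := sset_finite hη _ hnpos hnη
  have hf1 : (Sset L η n₁).Finite :=
    sset_finite hη n₁ h1 (Nat.Coprime.coprime_dvd_left hd₁ hnη)
  have hf2 : (Sset L η n₂).Finite :=
    sset_finite hη n₂ h2 (Nat.Coprime.coprime_dvd_left hd₂ hnη)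
  unfold rhoSum
  rw [finsum_mem_eq_finite_toFinset_sum _ hf, finsum_mem_eq_finite_toFinset_sum _ hf1,
    finsum_mem_eq_finite_toFinset_sum _ hf2, Finset.sum_mul_sum, ← Finset.sum_product']
  refine Finset.sum_nbij'
    (fun 𝔞 => (𝔞 ⊔ Ideal.span {((n₁ : ℕ) : ↥(Rring L η))},
               𝔞 ⊔ Ideal.span {((n₂ : ℕ) : ↥(Rring L η))}))
    (fun p => p.1 ⊓ p.2) ?_ ?_ ?_ ?_ ?_
  · intro 𝔞 h𝔞
    rw [Set.Finite.mem_toFinset] at h𝔞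
    rw [Finset.mem_product, Set.Finite.mem_toFinset, Set.Finite.mem_toFinset]
    exact ⟨sup_mem_sset hnpos hd₁ h𝔞, sup_mem_sset hnpos hd₂ h𝔞⟩
  · intro p hp
    rw [Finset.mem_product, Set.Finite.mem_toFinset, Set.Finite.mem_toFinset] at hp
    rw [Set.Finite.mem_toFinset]
    exact inf_mem_sset h1 h2 hcop nb₁ nb₂ hc₁ hc₂ hp.1 hp.2
  · intro 𝔞 h𝔞
    rw [Set.Finite.mem_toFinset] at h𝔞
    exact inf_sup_eq_self rfl h1 h2 hcop h𝔞
  · intro p hp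
    rw [Finset.mem_product, Set.Finite.mem_toFinset, Set.Finite.mem_toFinset] at hp
    have e1 : (p.1 ⊓ p.2) ⊔ Ideal.span {((n₁ : ℕ) : ↥(Rring L η))} = p.1 :=
      sset_inf_sup_left h1 h2 hcop hp.1 hp.2
    have e2 : (p.1 ⊓ p.2) ⊔ Ideal.span {((n₂ : ℕ) : ↥(Rring L η))} = p.2 := by
      rw [inf_comm]
      exact sset_inf_sup_left h2 h1 hcop.symm hp.2 hp.1
    exact Prod.ext e1 e2
  · intro 𝔞 h𝔞
    rw [Set.Finite.mem_toFinset] at h𝔞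
    have h𝔞₁ : 𝔞 ⊔ Ideal.span {((n₁ : ℕ) : ↥(Rring L η))} ∈ Sset L η n₁ :=
      sup_mem_sset hnpos hd₁ h𝔞
    have h𝔞₂ : 𝔞 ⊔ Ideal.span {((n₂ : ℕ) : ↥(Rring L η))} ∈ Sset L η n₂ :=
      sup_mem_sset hnpos hd₂ h𝔞
    have hdvd1 : (n₁ : ℤ) ∣ ((res (𝔞 ⊔ Ideal.span {((n₁ : ℕ) : ↥(Rring L η))}) : ℤ) - (res 𝔞 : ℤ)) := by
      have ha := (hres 𝔞 h𝔞.1).2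
      have ha1 := (hres _ h𝔞₁.1).2
      have hmem : ((((res 𝔞 : ℤ) - (res (𝔞 ⊔ Ideal.span {((n₁ : ℕ) : ↥(Rring L η))}) : ℤ)) : ℤ)
          : ↥(Rring L η)) ∈ 𝔞 ⊔ Ideal.span {((n₁ : ℕ) : ↥(Rring L η))} := by
        have heq : ((((res 𝔞 : ℤ) - (res (𝔞 ⊔ Ideal.span {((n₁ : ℕ) : ↥(Rring L η))}) : ℤ)) : ℤ)
            : ↥(Rring L η))
            = (α - ((res (𝔞 ⊔ Ideal.span {((n₁ : ℕ) : ↥(Rring L η))}) : ℕ) : ↥(Rring L η)))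
              - (α - ((res 𝔞 : ℕ) : ↥(Rring L η))) := by
          push_cast
          ring
        rw [heq]
        exact Submodule.sub_mem _ ha1 (Submodule.mem_sup_left ha)
      have := (mem_sup_span hnpos hd₁ h𝔞 _).mp hmem
      have hneg := this.neg_right
      rw [neg_sub] at hneg
      exact hneg
    have hdvd2 : (n₂ : ℤ) ∣ ((res (𝔞 ⊔ Ideal.span {((n₂ : ℕ) : ↥(Rring L η))}) : ℤ) - (res 𝔞 : ℤ)) := by
      have ha := (hres 𝔞 h𝔞.1).2
      have ha1 := (hres _ h𝔞₂.1).2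
      have hmem : ((((res 𝔞 : ℤ) - (res (𝔞 ⊔ Ideal.span {((n₂ : ℕ) : ↥(Rring L η))}) : ℤ)) : ℤ)
          : ↥(Rring L η)) ∈ 𝔞 ⊔ Ideal.span {((n₂ : ℕ) : ↥(Rring L η))} := by
        have heq : ((((res 𝔞 : ℤ) - (res (𝔞 ⊔ Ideal.span {((n₂ : ℕ) : ↥(Rring L η))}) : ℤ)) : ℤ)
            : ↥(Rring L η))
            = (α - ((res (𝔞 ⊔ Ideal.span {((n₂ : ℕ) : ↥(Rring L η))}) : ℕ) : ↥(Rring L η)))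
              - (α - ((res 𝔞 : ℕ) : ↥(Rring L η))) := by
          push_cast
          ring
        rw [heq]
        exact Submodule.sub_mem _ ha1 (Submodule.mem_sup_left ha)
      have := (mem_sup_span hnpos hd₂ h𝔞 _).mp hmem
      have hneg := this.neg_right
      rw [neg_sub] at hneg
      exact hneg
    exact term_eq h1 h2 hcop nb₁ nb₂ hc₁ hc₂ h _ _ _ hdvd1 hdvd2
end

section
/- Let n ≥ 2 and let (a_l)_{l ≥ 0} ∈ {0, 1, …, n−1}^ℕ be a digit sequence; for l ≥ 1 set α_l = a₀ + a₁n + ⋯ + a_{l−1}n^{l−1}. Then the digit sequence (a_l) is normal if and only if the sequence (α_l/n^l)_{l ≥ 1} is uniformly distributed in [0,1]. -/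
open NumberField Filter Asymptotics Topology

set_option maxHeartbeats 1000000
set_option synthInstance.maxHeartbeats 400000

open scoped Classical



section NrmAux
open Finset Filter Topology

lemma nrm_sum_lt {n : ℕ} (hn : 0 < n) (m : ℕ) (b : ℕ → ℕ) (hb : ∀ i < m, b i < n) :
    (∑ i ∈ range m, b i * n ^ i) < n ^ m := by
  induction m with
  | zero => simp
  | succ m ih =>
    rw [Finset.sum_range_succ]
    have h1 : ∑ i ∈ range m, b i * n ^ i < n ^ m := ih (fun i hi => hb i (by omega))
    have h2 : b m * n ^ m ≤ (n - 1) * n ^ m :=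
      Nat.mul_le_mul_right _ (by have := hb m (by omega); omega)
    have h3 : 0 < n ^ m := pow_pos hn m
    have h4 : n ^ m + (n - 1) * n ^ m = n ^ (m + 1) := by
      obtain ⟨n', rfl⟩ : ∃ n', n = n' + 1 := ⟨n - 1, by omega⟩
      simp only [Nat.add_sub_cancel]
      ring
    omega

lemma nrm_valInj {n : ℕ} (hn : 0 < n) : ∀ (m : ℕ) (b c : ℕ → ℕ), (∀ i < m, b i < n) →
    (∀ i < m, c i < n) →
    (∑ i ∈ range m, b i * n ^ i) = (∑ i ∈ range m, c i * n ^ i) → ∀ i < m, b i = c i := by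
  intro m
  induction m with
  | zero => intro b c _ _ _ i hi; omega
  | succ m ih =>
    intro b c hb hc hsum i hi
    have e : ∀ d : ℕ → ℕ,
        (∑ i ∈ range (m+1), d i * n ^ i) = (∑ i ∈ range m, d (i+1) * n ^ i) * n + d 0 := by
      intro d
      rw [Finset.sum_range_succ' (fun i => d i * n ^ i) m]
      simp only [pow_succ, pow_zero, mul_one, ← mul_assoc, ← Finset.sum_mul]
    rw [e b, e c] at hsum
    have h0 : b 0 = c 0 := by
      have hkey : ∀ X y : ℕ, y < n → (X * n + y) % n = y := by
        intro X y hy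
        rw [add_comm, Nat.add_mul_mod_self_right, Nat.mod_eq_of_lt hy]
      have hmod := congrArg (· % n) hsum
      rwa [hkey _ _ (hb 0 (Nat.succ_pos m)), hkey _ _ (hc 0 (Nat.succ_pos m))] at hmod
    have htail : (∑ i ∈ range m, b (i+1) * n ^ i) = ∑ i ∈ range m, c (i+1) * n ^ i := by
      rw [h0] at hsum
      have := Nat.add_right_cancel hsum
      exact Nat.eq_of_mul_eq_mul_right hn this
    rcases i with _ | j
    · exact h0
    · exact ih (fun i => b (i+1)) (fun i => c (i+1)) (fun i hi2 => hb (i+1) (by omega))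
        (fun i hi2 => hc (i+1) (by omega)) htail j (by omega)

lemma nrm_digitsum {n : ℕ} (hn : 0 < n) : ∀ (m t : ℕ), t < n ^ m →
    (∑ i ∈ range m, (t / n ^ i % n) * n ^ i) = t := by
  intro m
  induction m with
  | zero => intro t ht; simp at ht ⊢; omega
  | succ m ih =>
    intro t ht
    rw [Finset.sum_range_succ' (fun i => (t / n ^ i % n) * n ^ i) m]
    simp only [pow_zero, Nat.div_one, mul_one]
    have hterm : ∀ i, (t / n ^ (i+1) % n) * n ^ (i+1) = ((t / n) / n ^ i % n * n ^ i) * n := by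
      intro i
      rw [Nat.div_div_eq_div_mul, pow_succ']
      ring
    rw [Finset.sum_congr rfl (fun i _ => hterm i), ← Finset.sum_mul]
    have ht' : t / n < n ^ m := by
      apply Nat.div_lt_of_lt_mul
      rw [← pow_succ']
      exact ht
    rw [ih (t/n) ht', mul_comm]
    exact Nat.div_add_mod t n

noncomputable def xSeq (n : ℕ) (a : ℕ → ℕ) (l : ℕ) : ℝ :=
  (∑ k ∈ Finset.range l, (a k : ℝ) * (n : ℝ) ^ k) / (n : ℝ) ^ l

lemma xSeq_nonneg (n : ℕ) (a : ℕ → ℕ) (l : ℕ) : 0 ≤ xSeq n a l := by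
  unfold xSeq
  apply div_nonneg _ (by positivity)
  apply Finset.sum_nonneg
  intro k _
  positivity

lemma xSeq_lt_one {n : ℕ} (hn : 0 < n) (a : ℕ → ℕ) (ha : ∀ l, a l < n) (l : ℕ) :
    xSeq n a l < 1 := by
  have hS : (∑ k ∈ range l, a k * n ^ k) < n ^ l := nrm_sum_lt hn l a (fun i _ => ha i)
  have hp : (0:ℝ) < (n:ℝ) ^ l := by
    have : (0:ℝ) < (n:ℝ) := by exact_mod_cast hn
    positivity
  unfold xSeq
  rw [div_lt_one hp]
  calc (∑ k ∈ range l, (a k : ℝ) * (n:ℝ) ^ k) = ((∑ k ∈ range l, a k * n ^ k : ℕ) : ℝ) := by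
        push_cast; rfl
    _ < ((n ^ l : ℕ) : ℝ) := by exact_mod_cast hS
    _ = (n:ℝ) ^ l := by push_cast; rfl

lemma xSeq_mul {n : ℕ} (hn : 0 < n) (a : ℕ → ℕ) {m l : ℕ} (hl : m ≤ l) :
    xSeq n a l * (n:ℝ) ^ m
      = ((∑ i ∈ range m, a (l - m + i) * n ^ i : ℕ) : ℝ) + xSeq n a (l - m) := by
  have hn' : (0:ℝ) < (n:ℝ) := by exact_mod_cast hn
  have hpow : (n:ℝ) ^ l = (n:ℝ) ^ (l - m) * (n:ℝ) ^ m := by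
    rw [← pow_add, Nat.sub_add_cancel hl]
  have hsplit : (∑ k ∈ range l, (a k : ℝ) * (n:ℝ) ^ k)
      = (∑ k ∈ range (l-m), (a k : ℝ) * (n:ℝ) ^ k)
        + ((∑ i ∈ range m, a (l - m + i) * n ^ i : ℕ) : ℝ) * (n:ℝ) ^ (l - m) := by
    have e0 := (Finset.sum_Ico_consecutive (fun k => (a k : ℝ) * (n:ℝ) ^ k)
      (Nat.zero_le (l-m)) (Nat.sub_le l m)).symm
    simp only [← Finset.range_eq_Ico] at e0
    rw [e0]
    congr 1
    rw [Finset.sum_Ico_eq_sum_range]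
    have hm' : l - (l - m) = m := by omega
    rw [hm']
    push_cast
    rw [Finset.sum_mul]
    apply Finset.sum_congr rfl
    intro i _
    rw [pow_add]
    ring
  unfold xSeq
  rw [hsplit, hpow]
  have h1 : (n:ℝ) ^ (l - m) ≠ 0 := by positivity
  have h2 : (n:ℝ) ^ m ≠ 0 := by positivity
  field_simp
  ring

lemma nrm_key {n : ℕ} (hn : 2 ≤ n) (a : ℕ → ℕ) (ha : ∀ l, a l < n) {m l : ℕ} (hl : m ≤ l)
    (c : ℕ) :
    ((c : ℝ) / (n:ℝ) ^ m ≤ xSeq n a l ∧ xSeq n a l < ((c:ℝ)+1) / (n:ℝ) ^ m) ↔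
      (∑ i ∈ range m, a (l - m + i) * n ^ i) = c := by
  have hn0 : 0 < n := by omega
  have hnR : (0:ℝ) < (n:ℝ) := by exact_mod_cast hn0
  have hp : (0:ℝ) < (n:ℝ) ^ m := by positivity
  rw [div_le_iff₀ hp, lt_div_iff₀ hp]
  rw [xSeq_mul hn0 a hl]
  set A := (∑ i ∈ range m, a (l - m + i) * n ^ i) with hA
  have h0 : 0 ≤ xSeq n a (l - m) := xSeq_nonneg n a _
  have h1 : xSeq n a (l - m) < 1 := xSeq_lt_one hn0 a ha _
  constructor
  · rintro ⟨hle, hlt⟩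
    have hAc : (A:ℝ) < (c:ℝ) + 1 := lt_of_le_of_lt (le_add_of_nonneg_right h0) hlt
    have hcA : (c:ℝ) < (A:ℝ) + 1 := lt_of_le_of_lt hle (by linarith)
    have h2 : A < c + 1 := by exact_mod_cast hAc
    have h3 : c < A + 1 := by exact_mod_cast hcA
    omega
  · intro h
    rw [h]
    constructor <;> linarith

noncomputable def cntI (n : ℕ) (a : ℕ → ℕ) (u v : ℝ) (N : ℕ) : ℕ :=
  ((Finset.Icc 1 N).filter (fun l => u ≤ xSeq n a l ∧ xSeq n a l < v)).card

noncomputable def cntW (n : ℕ) (a : ℕ → ℕ) (m : ℕ) (d : ℕ → ℕ) (N : ℕ) : ℕ :=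
  ((Finset.range N).filter (fun l => ∀ i < m, a (l + i) = d i)).card

lemma nrm_close {n : ℕ} (hn : 2 ≤ n) (a : ℕ → ℕ) (ha : ∀ l, a l < n) {m : ℕ} (hm : 0 < m)
    (d : ℕ → ℕ) (hd : ∀ i < m, d i < n) (c : ℕ) (hc : c = ∑ i ∈ range m, d i * n ^ i)
    (N : ℕ) :
    cntW n a m d N ≤ cntI n a ((c:ℝ)/(n:ℝ)^m) (((c:ℝ)+1)/(n:ℝ)^m) N + m ∧
    cntI n a ((c:ℝ)/(n:ℝ)^m) (((c:ℝ)+1)/(n:ℝ)^m) N ≤ cntW n a m d N + m := by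
  have hn0 : 0 < n := by omega
  have EW : ∀ l, m ≤ l →
      (((c:ℝ)/(n:ℝ)^m ≤ xSeq n a l ∧ xSeq n a l < ((c:ℝ)+1)/(n:ℝ)^m) ↔
        ∀ i < m, a (l - m + i) = d i) := by
    intro l hl
    rw [nrm_key hn a ha hl c]
    subst hc
    constructor
    · intro h
      exact nrm_valInj hn0 m _ _ (fun i _ => ha _) hd h
    · intro h
      exact Finset.sum_congr rfl (fun i hi => by rw [h i (Finset.mem_range.mp hi)])
  constructor
  · -- cntW ≤ cntI + m
    unfold cntW cntI
    have hsub : (range N).filter (fun l => ∀ i < m, a (l + i) = d i) ⊆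
        ((range N).filter (fun l => (∀ i < m, a (l + i) = d i) ∧ l + m ≤ N)) ∪
        ((range N).filter (fun l => (∀ i < m, a (l + i) = d i) ∧ N < l + m)) := by
      intro l hl
      simp only [Finset.mem_filter, Finset.mem_union, Finset.mem_range] at hl ⊢
      rcases le_or_gt (l + m) N with h | h
      · exact Or.inl ⟨hl.1, hl.2, h⟩
      · exact Or.inr ⟨hl.1, hl.2, h⟩
    have hA : ((range N).filter (fun l => (∀ i < m, a (l + i) = d i) ∧ l + m ≤ N)).card ≤
        ((Finset.Icc 1 N).filter
          (fun l => (c:ℝ)/(n:ℝ)^m ≤ xSeq n a l ∧ xSeq n a l < ((c:ℝ)+1)/(n:ℝ)^m)).card := by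
      apply Finset.card_le_card_of_injOn (fun l => l + m)
      · intro l hl
        simp only [Finset.coe_filter, Set.mem_setOf_eq, Finset.mem_filter, Finset.mem_range, Finset.mem_Icc] at hl ⊢
        obtain ⟨hlN, hWl, hlm⟩ := hl
        refine ⟨⟨by omega, hlm⟩, ?_⟩
        rw [EW (l + m) (by omega)]
        simpa [Nat.add_sub_cancel] using hWl
      · intro x _ y _ h
        simp only at h
        omega
    have hB : ((range N).filter (fun l => (∀ i < m, a (l + i) = d i) ∧ N < l + m)).card ≤ m := by
      have hsub2 : (range N).filter (fun l => (∀ i < m, a (l + i) = d i) ∧ N < l + m) ⊆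
          Finset.Ico (N - m) N := by
        intro l hl
        simp only [Finset.mem_filter, Finset.mem_range, Finset.mem_Ico] at hl ⊢
        omega
      calc _ ≤ (Finset.Ico (N - m) N).card := Finset.card_le_card hsub2
        _ = N - (N - m) := Nat.card_Ico _ _
        _ ≤ m := by omega
    calc ((range N).filter (fun l => ∀ i < m, a (l + i) = d i)).card
        ≤ _ := Finset.card_le_card hsub
      _ ≤ _ := Finset.card_union_le _ _
      _ ≤ _ + m := Nat.add_le_add hA hB
  · -- cntI ≤ cntW + m
    unfold cntW cntI
    have hsub : (Finset.Icc 1 N).filter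
          (fun l => (c:ℝ)/(n:ℝ)^m ≤ xSeq n a l ∧ xSeq n a l < ((c:ℝ)+1)/(n:ℝ)^m) ⊆
        ((Finset.Icc 1 N).filter
          (fun l => ((c:ℝ)/(n:ℝ)^m ≤ xSeq n a l ∧ xSeq n a l < ((c:ℝ)+1)/(n:ℝ)^m) ∧ m ≤ l)) ∪
        ((Finset.Icc 1 N).filter
          (fun l => ((c:ℝ)/(n:ℝ)^m ≤ xSeq n a l ∧ xSeq n a l < ((c:ℝ)+1)/(n:ℝ)^m) ∧ l < m)) := by
      intro l hl
      simp only [Finset.mem_filter, Finset.mem_union, Finset.mem_Icc] at hl ⊢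
      rcases le_or_gt m l with h | h
      · exact Or.inl ⟨hl.1, hl.2, h⟩
      · exact Or.inr ⟨hl.1, hl.2, h⟩
    have hA : ((Finset.Icc 1 N).filter
          (fun l => ((c:ℝ)/(n:ℝ)^m ≤ xSeq n a l ∧ xSeq n a l < ((c:ℝ)+1)/(n:ℝ)^m) ∧ m ≤ l)).card
        ≤ ((range N).filter (fun l => ∀ i < m, a (l + i) = d i)).card := by
      apply Finset.card_le_card_of_injOn (fun l => l - m)
      · intro l hl
        simp only [Finset.coe_filter, Set.mem_setOf_eq, Finset.mem_filter, Finset.mem_Icc, Finset.mem_range] at hl ⊢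
        obtain ⟨⟨hl1, hlN⟩, hEl, hml⟩ := hl
        exact ⟨by omega, (EW l hml).mp hEl⟩
      · intro x hx y hy h
        have hx' := (Finset.mem_filter.mp hx).2.2
        have hy' := (Finset.mem_filter.mp hy).2.2
        simp only at h
        omega
    have hB : ((Finset.Icc 1 N).filter
          (fun l => ((c:ℝ)/(n:ℝ)^m ≤ xSeq n a l ∧ xSeq n a l < ((c:ℝ)+1)/(n:ℝ)^m) ∧ l < m)).card
        ≤ m := by
      have hsub2 : (Finset.Icc 1 N).filter
            (fun l => ((c:ℝ)/(n:ℝ)^m ≤ xSeq n a l ∧ xSeq n a l < ((c:ℝ)+1)/(n:ℝ)^m) ∧ l < m) ⊆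
          Finset.range m := by
        intro l hl
        simp only [Finset.mem_filter, Finset.mem_Icc, Finset.mem_range] at hl ⊢
        omega
      calc _ ≤ (Finset.range m).card := Finset.card_le_card hsub2
        _ = m := Finset.card_range m
    calc ((Finset.Icc 1 N).filter
          (fun l => (c:ℝ)/(n:ℝ)^m ≤ xSeq n a l ∧ xSeq n a l < ((c:ℝ)+1)/(n:ℝ)^m)).card
        ≤ _ := Finset.card_le_card hsub
      _ ≤ _ := Finset.card_union_le _ _
      _ ≤ _ + m := Nat.add_le_add hA hB

lemma nrm_transfer (f g : ℕ → ℕ) (C : ℕ) (h1 : ∀ N, f N ≤ g N + C) (h2 : ∀ N, g N ≤ f N + C)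
    (L : ℝ) (hg : Tendsto (fun N : ℕ => (g N : ℝ)/N) atTop (𝓝 L)) :
    Tendsto (fun N : ℕ => (f N : ℝ)/N) atTop (𝓝 L) := by
  have hC : Tendsto (fun N : ℕ => (C:ℝ)/N) atTop (𝓝 0) := tendsto_const_div_atTop_nhds_zero_nat (C:ℝ)
  have hlow : Tendsto (fun N : ℕ => (g N : ℝ)/N - (C:ℝ)/N) atTop (𝓝 L) := by
    simpa using hg.sub hC
  have hhigh : Tendsto (fun N : ℕ => (g N : ℝ)/N + (C:ℝ)/N) atTop (𝓝 L) := by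
    simpa using hg.add hC
  apply tendsto_of_tendsto_of_tendsto_of_le_of_le' hlow hhigh
  · filter_upwards [eventually_ge_atTop 1] with N hN
    have hN0 : (0:ℝ) < (N:ℝ) := by exact_mod_cast hN
    rw [← sub_div, div_le_div_iff_of_pos_right hN0]
    have := h2 N
    have hcast : (g N : ℝ) ≤ (f N : ℝ) + (C:ℝ) := by exact_mod_cast this
    linarith
  · filter_upwards [eventually_ge_atTop 1] with N hN
    have hN0 : (0:ℝ) < (N:ℝ) := by exact_mod_cast hN
    rw [← add_div, div_le_div_iff_of_pos_right hN0]
    have := h1 N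
    exact_mod_cast this

noncomputable def cnt0 (n : ℕ) (a : ℕ → ℕ) (w : ℝ) (N : ℕ) : ℕ :=
  ((Finset.Icc 1 N).filter (fun l => xSeq n a l < w)).card

lemma nrm_interval {n : ℕ} (hn : 2 ≤ n) (a : ℕ → ℕ) (ha : ∀ l, a l < n)
    (hnorm : IsNormalDigits n a) {m : ℕ} (hm : 0 < m)
    (d : ℕ → ℕ) (hd : ∀ i < m, d i < n) (c : ℕ) (hc : c = ∑ i ∈ range m, d i * n ^ i) :
    Tendsto (fun N : ℕ => (cntI n a ((c:ℝ)/(n:ℝ)^m) (((c:ℝ)+1)/(n:ℝ)^m) N : ℝ)/N) atTop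
      (𝓝 (1/(n:ℝ)^m)) := by
  have hω : ∀ i : Fin m, d (i : ℕ) < n := fun i => hd i i.isLt
  have h1 := hnorm m hm (fun i : Fin m => d (i : ℕ)) hω
  have heq : ∀ N : ℕ, ((Finset.range N).filter
      (fun l => ∀ i : Fin m, a (l + (i : ℕ)) = d (i : ℕ))).card = cntW n a m d N := by
    intro N
    unfold cntW
    apply congrArg
    apply Finset.filter_congr
    intro l _
    constructor
    · intro h i hi
      exact h ⟨i, hi⟩
    · intro h i
      exact h (i : ℕ) i.isLt
  have h2 : Tendsto (fun N : ℕ => (cntW n a m d N : ℝ)/N) atTop (𝓝 (1/(n:ℝ)^m)) := by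
    apply h1.congr
    intro N
    rw [heq N]
  exact nrm_transfer _ _ m (fun N => (nrm_close hn a ha hm d hd c hc N).2)
    (fun N => (nrm_close hn a ha hm d hd c hc N).1) _ h2

lemma nrm_partition {n : ℕ} (hn : 2 ≤ n) (a : ℕ → ℕ) (m j N : ℕ) :
    cnt0 n a ((j:ℝ)/(n:ℝ)^m) N
      = ∑ t ∈ range j, cntI n a ((t:ℝ)/(n:ℝ)^m) (((t:ℝ)+1)/(n:ℝ)^m) N := by
  have hn0 : 0 < n := by omega
  have hnR : (0:ℝ) < (n:ℝ) := by exact_mod_cast hn0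
  have hp : (0:ℝ) < (n:ℝ)^m := by positivity
  unfold cnt0 cntI
  have hdisj : ∀ t ∈ range j, ∀ t' ∈ range j, t ≠ t' →
      Disjoint ((Finset.Icc 1 N).filter
          (fun l => (t:ℝ)/(n:ℝ)^m ≤ xSeq n a l ∧ xSeq n a l < ((t:ℝ)+1)/(n:ℝ)^m))
        ((Finset.Icc 1 N).filter
          (fun l => (t':ℝ)/(n:ℝ)^m ≤ xSeq n a l ∧ xSeq n a l < ((t':ℝ)+1)/(n:ℝ)^m)) := by
    intro t _ t' _ hne
    rw [Finset.disjoint_left]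
    intro l h1 h2
    apply hne
    simp only [Finset.mem_filter] at h1 h2
    obtain ⟨_, ha1, ha2⟩ := h1
    obtain ⟨_, hb1, hb2⟩ := h2
    rw [div_le_iff₀ hp] at ha1 hb1
    rw [lt_div_iff₀ hp] at ha2 hb2
    have e1 : (t:ℝ) < (t':ℝ) + 1 := lt_of_le_of_lt ha1 hb2
    have e2 : (t':ℝ) < (t:ℝ) + 1 := lt_of_le_of_lt hb1 ha2
    have e1' : t < t' + 1 := by exact_mod_cast e1
    have e2' : t' < t + 1 := by exact_mod_cast e2
    omega
  rw [← Finset.card_biUnion hdisj]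
  congr 1
  ext l
  simp only [Finset.mem_biUnion, Finset.mem_filter, Finset.mem_range]
  constructor
  · rintro ⟨hlmem, hx⟩
    have h0 : (0:ℝ) ≤ xSeq n a l * (n:ℝ)^m := by
      have := xSeq_nonneg n a l
      positivity
    refine ⟨⌊xSeq n a l * (n:ℝ)^m⌋₊, ?_, hlmem, ?_, ?_⟩
    · rw [Nat.floor_lt h0]
      rw [← lt_div_iff₀ hp]
      exact hx
    · rw [div_le_iff₀ hp]
      exact Nat.floor_le h0
    · rw [lt_div_iff₀ hp]
      exact Nat.lt_floor_add_one _
  · rintro ⟨t, htj, hmem, h1, h2⟩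
    refine ⟨hmem, lt_of_lt_of_le h2 ?_⟩
    refine (div_le_div_iff_of_pos_right hp).mpr ?_
    have : t + 1 ≤ j := htj
    exact_mod_cast this

lemma nrm_prefix {n : ℕ} (hn : 2 ≤ n) (a : ℕ → ℕ) (ha : ∀ l, a l < n)
    (hnorm : IsNormalDigits n a) {m : ℕ} (hm : 0 < m) (j : ℕ) (hj : j ≤ n ^ m) :
    Tendsto (fun N : ℕ => (cnt0 n a ((j:ℝ)/(n:ℝ)^m) N : ℝ)/N) atTop
      (𝓝 ((j:ℝ)/(n:ℝ)^m)) := by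
  have hn0 : 0 < n := by omega
  have hsum : Tendsto (fun N : ℕ =>
      ∑ t ∈ range j, (cntI n a ((t:ℝ)/(n:ℝ)^m) (((t:ℝ)+1)/(n:ℝ)^m) N : ℝ)/N) atTop
      (𝓝 (∑ t ∈ range j, 1/(n:ℝ)^m)) := by
    apply tendsto_finset_sum
    intro t ht
    have htm : t < n ^ m := lt_of_lt_of_le (Finset.mem_range.mp ht) hj
    exact nrm_interval hn a ha hnorm hm (fun i => t / n ^ i % n)
      (fun i _ => Nat.mod_lt _ hn0) t (nrm_digitsum hn0 m t htm).symm
  have hval : (∑ t ∈ range j, 1/(n:ℝ)^m) = (j:ℝ)/(n:ℝ)^m := by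
    rw [Finset.sum_const, Finset.card_range, nsmul_eq_mul]
    ring
  rw [hval] at hsum
  apply hsum.congr
  intro N
  rw [nrm_partition hn a m j N]
  push_cast
  rw [Finset.sum_div]

lemma nrm_F {n : ℕ} (hn : 2 ≤ n) (a : ℕ → ℕ) (ha : ∀ l, a l < n)
    (hnorm : IsNormalDigits n a) (w : ℝ) (hw0 : 0 ≤ w) (hw1 : w ≤ 1) :
    Tendsto (fun N : ℕ => (cnt0 n a w N : ℝ)/N) atTop (𝓝 w) := by
  have hn0 : 0 < n := by omega
  have hnR : (1:ℝ) < (n:ℝ) := by exact_mod_cast hn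
  rw [Metric.tendsto_atTop]
  intro ε hε
  obtain ⟨m0, hm0⟩ := pow_unbounded_of_one_lt ((4:ℝ)/ε) hnR
  set m := m0 + 1 with hmdef
  have hm : 0 < m := Nat.succ_pos m0
  have hp : (0:ℝ) < (n:ℝ)^m := by positivity
  have hbig : (4:ℝ)/ε < (n:ℝ)^m := by
    apply lt_of_lt_of_le hm0
    apply pow_le_pow_right₀ (le_of_lt hnR) (by omega)
  have hsmall : 1/(n:ℝ)^m < ε/2 := by
    rw [div_lt_iff₀ hp]
    rw [div_lt_iff₀ hε] at hbig
    nlinarith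
  set k := ⌊w * (n:ℝ)^m⌋₊ with hkdef
  have hw' : (0:ℝ) ≤ w * (n:ℝ)^m := by positivity
  have hk1 : (k:ℝ) ≤ w * (n:ℝ)^m := Nat.floor_le hw'
  have hk2 : w * (n:ℝ)^m < (k:ℝ) + 1 := Nat.lt_floor_add_one _
  have hkle : k ≤ n ^ m := by
    have : (k:ℝ) ≤ ((n ^ m : ℕ):ℝ) := by
      push_cast
      nlinarith
    exact_mod_cast this
  set k' := min (k + 1) (n ^ m) with hk'def
  have hk'le : k' ≤ n ^ m := min_le_right _ _
  have hL := nrm_prefix hn a ha hnorm hm k hkle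
  have hU := nrm_prefix hn a ha hnorm hm k' hk'le
  rw [Metric.tendsto_atTop] at hL hU
  obtain ⟨N1, hN1⟩ := hL (ε/2) (half_pos hε)
  obtain ⟨N2, hN2⟩ := hU (ε/2) (half_pos hε)
  refine ⟨max N1 N2 + 1, fun N hN => ?_⟩
  have hNN1 : N ≥ N1 := by omega
  have hNN2 : N ≥ N2 := by omega
  have hNpos : (0:ℝ) < (N:ℝ) := by
    have : 1 ≤ N := by omega
    exact_mod_cast this
  have hmono : ∀ w1 w2 : ℝ, w1 ≤ w2 → cnt0 n a w1 N ≤ cnt0 n a w2 N := by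
    intro w1 w2 h
    apply Finset.card_le_card
    apply Finset.monotone_filter_right
    intro l _ hl
    exact lt_of_lt_of_le hl h
  -- bounds on rationals
  have hwk : (k:ℝ)/(n:ℝ)^m ≤ w := by
    rw [div_le_iff₀ hp]
    linarith
  have hwk' : w ≤ (k':ℝ)/(n:ℝ)^m := by
    rw [le_div_iff₀ hp]
    rcases le_or_gt (k + 1) (n ^ m) with h | h
    · have : k' = k + 1 := min_eq_left h
      rw [this]
      push_cast
      linarith
    · have : k' = n ^ m := min_eq_right (by omega)
      rw [this]
      push_cast
      nlinarith
  have hk'close : (k':ℝ)/(n:ℝ)^m ≤ w + 1/(n:ℝ)^m := by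
    rw [div_le_iff₀ hp]
    have : (k':ℝ) ≤ (k:ℝ) + 1 := by
      have : k' ≤ k + 1 := min_le_left _ _
      exact_mod_cast this
    have expand : (w + 1/(n:ℝ)^m) * (n:ℝ)^m = w * (n:ℝ)^m + 1 := by
      field_simp
    rw [expand]
    linarith
  have hkclose : w - 1/(n:ℝ)^m ≤ (k:ℝ)/(n:ℝ)^m := by
    rw [le_div_iff₀ hp]
    have expand : (w - 1/(n:ℝ)^m) * (n:ℝ)^m = w * (n:ℝ)^m - 1 := by
      field_simp
    rw [expand]
    linarith
  have hd1 := hN1 N hNN1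
  have hd2 := hN2 N hNN2
  rw [Real.dist_eq, abs_lt] at hd1 hd2 ⊢
  have hlow : (cnt0 n a ((k:ℝ)/(n:ℝ)^m) N : ℝ)/N ≤ (cnt0 n a w N : ℝ)/N := by
    apply (div_le_div_iff_of_pos_right hNpos).mpr
    exact_mod_cast hmono _ _ hwk
  have hhigh : (cnt0 n a w N : ℝ)/N ≤ (cnt0 n a ((k':ℝ)/(n:ℝ)^m) N : ℝ)/N := by
    apply (div_le_div_iff_of_pos_right hNpos).mpr
    exact_mod_cast hmono _ _ hwk'
  constructor
  · have := hd1.1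
    have h2 : (k:ℝ)/(n:ℝ)^m - ε/2 < (cnt0 n a ((k:ℝ)/(n:ℝ)^m) N : ℝ)/N := by linarith
    have h3 : w - 1/(n:ℝ)^m - ε/2 < (cnt0 n a w N : ℝ)/N := by linarith
    linarith
  · have := hd2.2
    have h2 : (cnt0 n a ((k':ℝ)/(n:ℝ)^m) N : ℝ)/N < (k':ℝ)/(n:ℝ)^m + ε/2 := by linarith
    have h3 : (cnt0 n a w N : ℝ)/N < w + 1/(n:ℝ)^m + ε/2 := by linarith
    linarith

end NrmAux

theorem statement18 (n : ℕ) (hn : 2 ≤ n) (a : ℕ → ℕ) (ha : ∀ l, a l < n) :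
    IsNormalDigits n a ↔
      (∀ u v : ℝ, 0 ≤ u → u < v → v ≤ 1 →
        Filter.Tendsto (fun N : ℕ =>
          (((Finset.Icc 1 N).filter (fun l =>
            u ≤ (∑ k ∈ Finset.range l, (a k : ℝ) * (n : ℝ) ^ k) / (n : ℝ) ^ l ∧
            (∑ k ∈ Finset.range l, (a k : ℝ) * (n : ℝ) ^ k) / (n : ℝ) ^ l < v)).card : ℝ) / N)
          Filter.atTop (nhds (v - u))) := by
  have hn0 : 0 < n := by omega
  have hnR : (0:ℝ) < (n:ℝ) := by exact_mod_cast hn0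
  constructor
  · -- normal → uniformly distributed
    intro hnorm u v hu huv hv1
    have Fu := nrm_F hn a ha hnorm u hu (le_of_lt (lt_of_lt_of_le huv hv1))
    have Fv := nrm_F hn a ha hnorm v (le_trans hu (le_of_lt huv)) hv1
    have hsplit : ∀ N : ℕ, cnt0 n a u N +
        ((Finset.Icc 1 N).filter (fun l => u ≤ xSeq n a l ∧ xSeq n a l < v)).card
          = cnt0 n a v N := by
      intro N
      unfold cnt0
      rw [← Finset.card_filter_add_card_filter_not
        (s := (Finset.Icc 1 N).filter (fun l => xSeq n a l < v)) (p := fun l => xSeq n a l < u)]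
      congr 1
      · rw [Finset.filter_filter]
        apply congrArg
        apply Finset.filter_congr
        intro l _
        constructor
        · intro h
          exact ⟨lt_trans h huv, h⟩
        · intro h
          exact h.2
      · rw [Finset.filter_filter]
        apply congrArg
        apply Finset.filter_congr
        intro l _
        constructor
        · intro h
          exact ⟨h.2, not_lt.mpr h.1⟩
        · intro h
          exact ⟨not_lt.mp h.2, h.1⟩
    refine Filter.Tendsto.congr (fun N => ?_) (Fv.sub Fu)
    have hc : (cnt0 n a u N : ℝ) +
        (((Finset.Icc 1 N).filter (fun l => u ≤ xSeq n a l ∧ xSeq n a l < v)).card : ℝ)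
          = (cnt0 n a v N : ℝ) := by
      exact_mod_cast hsplit N
    show (cnt0 n a v N : ℝ) / N - (cnt0 n a u N : ℝ) / N
        = (((Finset.Icc 1 N).filter (fun l => u ≤ xSeq n a l ∧ xSeq n a l < v)).card : ℝ) / N
    rw [← sub_div]
    congr 1
    linarith
  · -- uniformly distributed → normal
    intro hUD m hm ω hω
    have hp : (0:ℝ) < (n:ℝ) ^ m := by positivity
    set d : ℕ → ℕ := fun i => if h : i < m then ω ⟨i, h⟩ else 0 with hd_def
    have hd : ∀ i < m, d i < n := by
      intro i hi
      simp only [hd_def]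
      rw [dif_pos hi]
      exact hω ⟨i, hi⟩
    set c := ∑ i ∈ Finset.range m, d i * n ^ i with hc
    have hclt : c < n ^ m := nrm_sum_lt hn0 m d hd
    have hu : (0:ℝ) ≤ (c:ℝ)/(n:ℝ)^m := by positivity
    have huv : (c:ℝ)/(n:ℝ)^m < ((c:ℝ)+1)/(n:ℝ)^m :=
      (div_lt_div_iff_of_pos_right hp).mpr (lt_add_one _)
    have hv1 : ((c:ℝ)+1)/(n:ℝ)^m ≤ 1 := by
      rw [div_le_one hp]
      have : (c + 1 : ℕ) ≤ n ^ m := hclt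
      exact_mod_cast this
    have hUD' := hUD _ _ hu huv hv1
    have hlim : ((c:ℝ)+1)/(n:ℝ)^m - (c:ℝ)/(n:ℝ)^m = 1/(n:ℝ)^m := by
      rw [div_sub_div_same]
      norm_num
    rw [hlim] at hUD'
    have hI : Filter.Tendsto
        (fun N : ℕ => (cntI n a ((c:ℝ)/(n:ℝ)^m) (((c:ℝ)+1)/(n:ℝ)^m) N : ℝ)/N)
        Filter.atTop (nhds (1/(n:ℝ)^m)) := hUD'
    have hW := nrm_transfer _ _ m (fun N => (nrm_close hn a ha hm d hd c hc N).1)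
      (fun N => (nrm_close hn a ha hm d hd c hc N).2) _ hI
    refine Filter.Tendsto.congr (fun N => ?_) hW
    congr 1
    unfold cntW
    apply congrArg
    apply congrArg
    apply Finset.filter_congr
    intro l _
    constructor
    · intro h i
      have := h (i : ℕ) i.isLt
      simp only [hd_def] at this
      rw [dif_pos i.isLt] at this
      rwa [Fin.eta] at this
    · intro h i hi
      simp only [hd_def]
      rw [dif_pos hi]
      exact h ⟨i, hi⟩
end
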